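/- arXiv:1905.07429 — 6 statements merged into one kernel-verified Lean document; each statement's English description precedes it below -/
import Mathlib

section
/- Let T be a triangulated category with a non-degenerate t-structure. Let (j_{−k,−k−1} : X_{−k} → X_{−k−1})_{k≥0} be a sequence of morphisms in T such that the coproduct ⊕_k X_{−k} exists in T, and let X = hocolim_k X_{−k} with the canonical morphisms j_{−k} : X_{−k} → X. Assume that for every n ≥ 0 the induced morphism H^i(j_{−n,−n−1}) : H^i(X_{−n}) → H^i(X_{−n−1}) is an isomorphism for all i > −n and an epimorphism for i = −n. Then for every n ≥ 0 the induced morphism H^i(j_{−n}) : H^i(X_{−n}) → H^i(X) is an isomorphism for all i > −n and an epimorphism for i = −n. -/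
open CategoryTheory Category Limits Pretriangulated Triangulated

universe v u v' u'

/-! If `t.IsGE Z (-n)`, the hypotheses put the cone of each `j k` in `t.le (-k-1)`, so for `k ≥ n`
the maps `Hom(X (k+1), Z) → Hom(X k, Z)` are injective, and surjective when `t.IsGE Z (-n+1)`.
The triangle defining `Y` gives `0 → lim¹ Hom(X k⟦1⟧, Z) → Hom(Y, Z) → lim Hom(X k, Z) → 0`,
and the `lim¹` term vanishes by the Mittag-Leffler condition. Hence `Hom(Y, Z) → Hom(X n, Z)`
is injective for `Z ≥ -n` and surjective for `Z ≥ -n+1`, i.e. the cone of `X n ⟶ Y` lies in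
`t.le (-n-1)`, which is the claim about cohomology. -/

section Sequences

variable {C : Type u} [Category.{v} C] {X : ℕ → C} (j : ∀ k, X k ⟶ X (k + 1)) {Z : C}

lemma exists_compatible_family_extending (n : ℕ)
    (hext : ∀ k, n ≤ k → ∀ φ : X k ⟶ Z, ∃ ψ, j k ≫ ψ = φ) (φ₀ : X n ⟶ Z) :
    ∃ Φ : ∀ k, X k ⟶ Z, (∀ k, j k ≫ Φ (k + 1) = Φ k) ∧ Φ n = φ₀ := by
  choose ext hext using hext
  let Φ : ∀ k, X k ⟶ Z := fun k => Nat.rec (motive := fun k => X k ⟶ Z)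
    (Functor.OfSequence.map j 0 n n.zero_le ≫ φ₀)
    (fun k Φk => if hk : k + 1 ≤ n then Functor.OfSequence.map j (k + 1) n hk ≫ φ₀
      else ext k (by omega) Φk) k
  have hΦ_le : ∀ k (hk : k ≤ n), Φ k = Functor.OfSequence.map j k n hk ≫ φ₀ := by
    rintro (_ | k) hk
    · rfl
    · exact dif_pos hk
  refine ⟨Φ, fun k => ?_, by rw [hΦ_le n le_rfl, Functor.OfSequence.map_id, id_comp]⟩
  by_cases hk : k + 1 ≤ n
  · rw [hΦ_le _ hk, hΦ_le k (by omega), Functor.OfSequence.map_comp j k (k + 1) n (by omega) hk,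
      Functor.OfSequence.map_le_succ, assoc]
  · exact (congrArg (j k ≫ ·) (dif_neg hk)).trans (hext k _ _)

lemma compatible_family_eq_zero [Preadditive C] (n : ℕ)
    (hinj : ∀ k, n ≤ k → ∀ ψ : X (k + 1) ⟶ Z, j k ≫ ψ = 0 → ψ = 0)
    (Φ : ∀ k, X k ⟶ Z) (hΦ : ∀ k, j k ≫ Φ (k + 1) = Φ k) (hn : Φ n = 0) (k : ℕ) : Φ k = 0 := by
  rcases le_total n k with hk | hk
  · induction k, hk using Nat.le_induction with
    | base => exact hn
    | succ k hk ih => exact hinj k hk _ ((hΦ k).trans ih)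
  · induction hk using Nat.decreasingInduction with
    | self => exact hn
    | of_succ k _ ih => rw [← hΦ k, ih, comp_zero]

lemma exists_sub_comp_eq_of_eventually_zero [Preadditive C] (m : ℕ) (h : ∀ k, X k ⟶ Z)
    (hh : ∀ k, m ≤ k → h k = 0) :
    ∃ u : ∀ k, X k ⟶ Z, ∀ k, u k - j k ≫ u (k + 1) = h k := by
  induction m generalizing h with
  | zero => exact ⟨0, fun k => by simp [hh k k.zero_le]⟩
  | succ m ih =>
    let v : ∀ k, X k ⟶ Z := fun k => if m ≤ k then h k else 0
    obtain ⟨u, hu⟩ := ih (fun k => h k - (v k - j k ≫ v (k + 1))) fun k hk => by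
      simp [v, hk, hh (k + 1) (by omega)]
    refine ⟨u + v, fun k => ?_⟩
    rw [Pi.add_apply, Pi.add_apply, Preadditive.comp_add, add_sub_add_comm, hu k]
    abel

lemma exists_sub_comp_eq [Preadditive C] (n : ℕ)
    (hext : ∀ k, n ≤ k → ∀ φ : X k ⟶ Z, ∃ ψ, j k ≫ ψ = φ) (h : ∀ k, X k ⟶ Z) :
    ∃ u : ∀ k, X k ⟶ Z, ∀ k, u k - j k ≫ u (k + 1) = h k := by
  choose ext hext using hext
  let w : ∀ k, X k ⟶ Z := fun k => Nat.rec (motive := fun k => X k ⟶ Z) 0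
    (fun k wk => if hk : n ≤ k then ext k hk (wk - h k) else 0) k
  have hw : ∀ k, n ≤ k → w k - j k ≫ w (k + 1) = h k := fun k hk => by
    rw [show w (k + 1) = _ from dif_pos hk, hext, sub_sub_cancel]
  obtain ⟨u, hu⟩ := exists_sub_comp_eq_of_eventually_zero j n
    (fun k => h k - (w k - j k ≫ w (k + 1))) fun k hk => by rw [hw k hk, sub_self]
  refine ⟨u + w, fun k => ?_⟩
  rw [Pi.add_apply, Pi.add_apply, Preadditive.comp_add, add_sub_add_comm, hu k]
  abel

end Sequences

lemma CategoryTheory.Adjunction.exists_map_comp_eq {C : Type u} [Category.{v} C]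
    {D : Type u'} [Category.{v'} D] {L : C ⥤ D} {R : D ⥤ C} (adj : L ⊣ R) {A B : C} {W : D}
    (q : A ⟶ B) (hq : ∀ g : A ⟶ R.obj W, ∃ f, q ≫ f = g) (ψ : L.obj A ⟶ W) :
    ∃ f, L.map q ≫ f = ψ := by
  obtain ⟨f, hf⟩ := hq (adj.homEquiv _ _ ψ)
  exact ⟨(adj.homEquiv _ _).symm f, by
    rw [← adj.homEquiv_naturality_left_symm, hf, Equiv.symm_apply_apply]⟩

section HomotopyColimit

variable {C : Type u} [Category.{v} C] {X : ℕ → C} (j : ∀ k, X k ⟶ X (k + 1)) [HasCoproduct X]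

noncomputable def sigmaSucc : ∐ X ⟶ ∐ X := Sigma.desc fun k => j k ≫ Sigma.ι X (k + 1)

@[simp]
lemma ι_sigmaSucc (k : ℕ) : Sigma.ι X k ≫ sigmaSucc j = j k ≫ Sigma.ι X (k + 1) :=
  Sigma.ι_desc _ _

variable [Preadditive C]

lemma ι_id_sub_sigmaSucc_comp {W : C} (k : ℕ) (h : ∐ X ⟶ W) :
    Sigma.ι X k ≫ (𝟙 (∐ X) - sigmaSucc j) ≫ h =
      Sigma.ι X k ≫ h - j k ≫ Sigma.ι X (k + 1) ≫ h := by
  rw [Preadditive.sub_comp, Preadditive.comp_sub, id_comp, ← assoc, ι_sigmaSucc, assoc]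

lemma exists_id_sub_sigmaSucc_comp_eq {W : C}
    (hML : ∀ h : ∀ k, X k ⟶ W, ∃ u : ∀ k, X k ⟶ W, ∀ k, u k - j k ≫ u (k + 1) = h k)
    (h : ∐ X ⟶ W) : ∃ h', (𝟙 (∐ X) - sigmaSucc j) ≫ h' = h := by
  obtain ⟨u, hu⟩ := hML fun k => Sigma.ι X k ≫ h
  refine ⟨Sigma.desc u, Sigma.hom_ext _ _ fun k => ?_⟩
  rw [ι_id_sub_sigmaSucc_comp, Sigma.ι_desc, Sigma.ι_desc, hu k]

variable [HasZeroObject C] [HasShift C ℤ] [∀ n : ℤ, (shiftFunctor C n).Additive]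
  [Pretriangulated C] {Y Z : C} {π : ∐ X ⟶ Y} {δ : Y ⟶ (∐ X)⟦(1 : ℤ)⟧}
  (hT : Triangle.mk (𝟙 (∐ X) - sigmaSucc j) π δ ∈ distTriang C)
include hT

lemma comp_hocolim_compatible (f : Y ⟶ Z) (k : ℕ) :
    j k ≫ Sigma.ι X (k + 1) ≫ π ≫ f = Sigma.ι X k ≫ π ≫ f := by
  have h₀ : (𝟙 (∐ X) - sigmaSucc j) ≫ π = 0 := comp_distTriang_mor_zero₁₂ _ hT
  have h : (𝟙 (∐ X) - sigmaSucc j) ≫ π ≫ f = 0 := by rw [← assoc, h₀, zero_comp]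
  have hk := ι_id_sub_sigmaSucc_comp j k (π ≫ f)
  rw [h, comp_zero] at hk
  exact (sub_eq_zero.1 hk.symm).symm

lemma exists_hocolim_desc (Φ : ∀ k, X k ⟶ Z) (hΦ : ∀ k, j k ≫ Φ (k + 1) = Φ k) :
    ∃ f : Y ⟶ Z, ∀ k, Sigma.ι X k ≫ π ≫ f = Φ k := by
  have h : (𝟙 (∐ X) - sigmaSucc j) ≫ Sigma.desc Φ = 0 := Sigma.hom_ext _ _ fun k => by
    rw [ι_id_sub_sigmaSucc_comp, Sigma.ι_desc, Sigma.ι_desc, hΦ, sub_self, comp_zero]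
  obtain ⟨f, hf⟩ := Triangle.yoneda_exact₂ _ hT (Sigma.desc Φ) h
  refine ⟨f, fun k => ?_⟩
  have : π ≫ f = Sigma.desc Φ := hf.symm
  rw [this, Sigma.ι_desc]

lemma hocolim_hom_ext
    (hsurj : ∀ h : ∐ X ⟶ Z⟦(-1 : ℤ)⟧, ∃ h', (𝟙 (∐ X) - sigmaSucc j) ≫ h' = h)
    (f : Y ⟶ Z) (hf : ∀ k, Sigma.ι X k ≫ π ≫ f = 0) : f = 0 := by
  have hπ : π ≫ f = 0 := Sigma.hom_ext _ _ fun k => (hf k).trans comp_zero.symm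
  obtain ⟨h, rfl⟩ := Triangle.yoneda_exact₃ _ hT f hπ
  obtain ⟨h', rfl⟩ := (shiftEquiv C (1 : ℤ)).toAdjunction.exists_map_comp_eq _ hsurj h
  exact (comp_distTriang_mor_zero₃₁_assoc _ hT h').trans zero_comp

end HomotopyColimit

section Cohomology

variable {C : Type u} [Category.{v} C] [Preadditive C] [HasZeroObject C] [HasShift C ℤ]
  [∀ n : ℤ, (shiftFunctor C n).Additive] [Pretriangulated C]
  {A : Type u'} [Category.{v'} A] [Abelian A]

lemma CategoryTheory.Functor.isZero_obj_shift_obj₃_iff (F : C ⥤ A) [F.IsHomological]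
    (T : Triangle C) (hT : T ∈ distTriang C) (a : ℤ) :
    (∀ i, a ≤ i → IsZero (F.obj (T.obj₃⟦i⟧))) ↔
      (∀ i, a < i → IsIso (F.map (T.mor₁⟦i⟧'))) ∧ Epi (F.map (T.mor₁⟦a⟧')) := by
  -- with this shift sequence, `(F.shift i).map f` is `F.map (f⟦i⟧')` by definition
  let : F.ShiftSequence ℤ := Functor.ShiftSequence.tautological F ℤ
  have hepi (i : ℤ) : Epi (F.map (T.mor₁⟦i⟧')) ↔ F.map (T.mor₂⟦i⟧') = 0 :=
    F.homologySequence_epi_shift_map_mor₁_iff T hT i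
  have hmono (i : ℤ) :
      Mono (F.map (T.mor₁⟦i + 1⟧')) ↔ F.homologySequenceδ T i (i + 1) rfl = 0 :=
    F.homologySequence_mono_shift_map_mor₁_iff T hT i (i + 1) rfl
  constructor
  · intro hK
    have hepi' (i : ℤ) (hi : a ≤ i) : Epi (F.map (T.mor₁⟦i⟧')) :=
      (hepi i).2 ((hK i hi).eq_of_tgt _ _)
    refine ⟨fun i hi => ?_, hepi' a le_rfl⟩
    have := hepi' i hi.le
    obtain ⟨i, rfl⟩ : ∃ i', i = i' + 1 := ⟨i - 1, by ring⟩
    have := (hmono i).2 ((hK i (by omega)).eq_of_src _ _)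
    exact isIso_of_mono_of_epi _
  · rintro ⟨hiso, hepi_a⟩ i hi
    have h₁ : Epi (F.map (T.mor₁⟦i⟧')) := by
      rcases hi.eq_or_lt with rfl | hi
      · exact hepi_a
      · have := hiso i hi
        infer_instance
    have h₂ : Mono (F.map (T.mor₁⟦i + 1⟧')) := by
      have := hiso (i + 1) (by omega)
      infer_instance
    exact (F.homologySequence_exact₃ T hT i (i + 1) rfl).isZero_X₂ ((hepi i).1 h₁)
      ((hmono i).1 h₂)

end Cohomology

namespace CategoryTheory.Triangulated.TStructure

variable {C : Type u} [Category.{v} C] [Preadditive C] [HasZeroObject C] [HasShift C ℤ]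
  [∀ n : ℤ, (shiftFunctor C n).Additive] [Pretriangulated C] (t : TStructure C)

lemma exists_mor₁_comp_eq (T : Triangle C) (hT : T ∈ distTriang C) (a : ℤ)
    [t.IsLE T.obj₃ (a - 1)] (Z : C) [t.IsGE Z (a + 1)] (φ : T.obj₁ ⟶ Z) :
    ∃ ψ, T.mor₁ ≫ ψ = φ := by
  have := t.isLE_shift T.obj₃ (a - 1) (-1) a
  obtain ⟨ψ, hψ⟩ := Triangle.yoneda_exact₂ _ (inv_rot_of_distTriang _ hT) φ
    (t.zero_of_isLE_of_isGE _ a (a + 1) (by omega) this ‹_›)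
  exact ⟨ψ, hψ.symm⟩

lemma eq_zero_of_mor₁_comp_eq_zero (T : Triangle C) (hT : T ∈ distTriang C) (a : ℤ)
    [t.IsLE T.obj₃ (a - 1)] (Z : C) [t.IsGE Z a] (ψ : T.obj₂ ⟶ Z) (h : T.mor₁ ≫ ψ = 0) :
    ψ = 0 := by
  obtain ⟨g, rfl⟩ := Triangle.yoneda_exact₂ _ hT ψ h
  rw [t.zero g (a - 1) a, comp_zero]

lemma isLE_obj₃_of_mor₁ (T : Triangle C) (hT : T ∈ distTriang C) (a : ℤ)
    (hsurj : ∀ Z, t.IsGE Z (a + 1) → ∀ φ : T.obj₁ ⟶ Z, ∃ ψ, T.mor₁ ≫ ψ = φ)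
    (hinj : ∀ Z, t.IsGE Z a → ∀ ψ : T.obj₂ ⟶ Z, T.mor₁ ≫ ψ = 0 → ψ = 0) :
    t.IsLE T.obj₃ (a - 1) := by
  rw [t.isLE_iff_orthogonal (a - 1) a (by ring)]
  intro Z φ hZ
  have hZ' := t.isGE_shift Z a (-1) (a + 1)
  obtain ⟨ψ, rfl⟩ := Triangle.yoneda_exact₃ _ hT φ
    (hinj Z hZ _ (by rw [← assoc, comp_distTriang_mor_zero₁₂ _ hT, zero_comp]))
  obtain ⟨f, rfl⟩ := (shiftEquiv C (1 : ℤ)).toAdjunction.exists_map_comp_eq _ (hsurj _ hZ') ψ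
  exact (comp_distTriang_mor_zero₃₁_assoc _ hT f).trans zero_comp

section Cohomology

variable {A : Type u'} [Category.{v'} A] [Abelian A] {F : C ⥤ A} [F.IsHomological]
  (hLE : ∀ (n : ℤ) (X : C), t.le n X ↔ ∀ i : ℤ, n < i → IsZero (F.obj (X⟦i⟧)))
include hLE

lemma isLE_obj₃_iff (T : Triangle C) (hT : T ∈ distTriang C) (a : ℤ) :
    t.IsLE T.obj₃ (a - 1) ↔
      (∀ i, a < i → IsIso (F.map (T.mor₁⟦i⟧'))) ∧ Epi (F.map (T.mor₁⟦a⟧')) := by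
  rw [← t.le_iff_isLE, hLE, ← F.isZero_obj_shift_obj₃_iff T hT]
  exact forall_congr' fun i => ⟨fun h hi => h (by omega), fun h hi => h (by omega)⟩

variable {X Y : C} (f : X ⟶ Y) (a : ℤ) (hiso : ∀ i, a < i → IsIso (F.map (f⟦i⟧')))
  (hepi : Epi (F.map (f⟦a⟧')))
include hiso hepi

lemma exists_comp_eq_of_cohomology (Z : C) [t.IsGE Z (a + 1)] (φ : X ⟶ Z) :
    ∃ ψ, f ≫ ψ = φ := by
  obtain ⟨K, _, _, hK⟩ := distinguished_cocone_triangle f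
  have := (t.isLE_obj₃_iff hLE _ hK a).2 ⟨hiso, hepi⟩
  exact t.exists_mor₁_comp_eq _ hK a Z φ

lemma eq_zero_of_comp_eq_zero_of_cohomology (Z : C) [t.IsGE Z a] (ψ : Y ⟶ Z) (h : f ≫ ψ = 0) :
    ψ = 0 := by
  obtain ⟨K, _, _, hK⟩ := distinguished_cocone_triangle f
  have := (t.isLE_obj₃_iff hLE _ hK a).2 ⟨hiso, hepi⟩
  exact t.eq_zero_of_mor₁_comp_eq_zero _ hK a Z ψ h

end Cohomology

end CategoryTheory.Triangulated.TStructure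

/-- Let `C` be a triangulated category with a non-degenerate t-structure
`t`, whose associated cohomology is encoded by a homological functor `F : C ⥤ A` to an
abelian category (playing the role of the heart), with `Hⁱ(X) := F.obj (X⟦i⟧)`; the
hypotheses `hLE`/`hGE` express that the aisles are exactly detected by the vanishing of
this cohomology, which holds precisely for the cohomology of a non-degenerate t-structure.
Let `(jₖ : Xₖ ⟶ Xₖ₊₁)ₖ` be a sequence (where `Xₖ` plays the role of `X₋ₖ`) such that
`∐ X` exists, and let `Y` be a homotopy colimit, i.e. a cone of `1 - μ`, with canonical
maps `Sigma.ι X n ≫ π : Xₙ ⟶ Y`. If for every `n ≥ 0` the map `Hⁱ(jₙ)` is an isomorphism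
for all `i > -n` and an epimorphism for `i = -n`, then for every `n ≥ 0` the map
`Hⁱ(Sigma.ι X n ≫ π)` is an isomorphism for all `i > -n` and an epimorphism for `i = -n`. -/
theorem statement2 {C : Type u} [Category.{v} C] [Preadditive C] [HasZeroObject C]
    [HasShift C ℤ] [∀ n : ℤ, (shiftFunctor C n).Additive] [Pretriangulated C]
    {A : Type u'} [Category.{v'} A] [Abelian A]
    (t : TStructure C) (F : C ⥤ A) [F.IsHomological]
    (hLE : ∀ (n : ℤ) (X : C), t.le n X ↔ ∀ i : ℤ, n < i → IsZero (F.obj (X⟦i⟧)))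
    (hGE : ∀ (n : ℤ) (X : C), t.ge n X ↔ ∀ i : ℤ, i < n → IsZero (F.obj (X⟦i⟧)))
    (X : ℕ → C) (j : ∀ k : ℕ, X k ⟶ X (k + 1)) [HasCoproduct X]
    (Y : C) (π : (∐ X) ⟶ Y) (δ : Y ⟶ (∐ X)⟦(1 : ℤ)⟧)
    (hT : Triangle.mk (𝟙 (∐ X) - Sigma.desc fun k => j k ≫ Sigma.ι X (k + 1)) π δ ∈
      distTriang C)
    (hiso : ∀ (n : ℕ) (i : ℤ), -(n : ℤ) < i → IsIso (F.map ((j n)⟦i⟧')))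
    (hepi : ∀ n : ℕ, Epi (F.map ((j n)⟦-(n : ℤ)⟧'))) :
    ∀ n : ℕ, (∀ i : ℤ, -(n : ℤ) < i → IsIso (F.map ((Sigma.ι X n ≫ π)⟦i⟧'))) ∧
      Epi (F.map ((Sigma.ι X n ≫ π)⟦-(n : ℤ)⟧')) := by
  intro n
  have hext (k : ℕ) (hk : n ≤ k) (Z : C) (_ : t.IsGE Z (-n + 1)) (φ : X k ⟶ Z) :
      ∃ ψ, j k ≫ ψ = φ :=
    have := t.isGE_of_ge Z (-k + 1) (-n + 1)
    t.exists_comp_eq_of_cohomology hLE (j k) (-k) (hiso k) (hepi k) Z φ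
  have hinj (k : ℕ) (hk : n ≤ k) (Z : C) (_ : t.IsGE Z (-n)) (ψ : X (k + 1) ⟶ Z)
      (h : j k ≫ ψ = 0) : ψ = 0 :=
    have := t.isGE_of_ge Z (-k) (-n)
    t.eq_zero_of_comp_eq_zero_of_cohomology hLE (j k) (-k) (hiso k) (hepi k) Z ψ h
  have hsurjY (Z : C) (hZ : t.IsGE Z (-n + 1)) (φ : X n ⟶ Z) :
      ∃ f : Y ⟶ Z, (Sigma.ι X n ≫ π) ≫ f = φ := by
    obtain ⟨Φ, hΦ, rfl⟩ := exists_compatible_family_extending j n (fun k hk => hext k hk Z hZ) φ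
    obtain ⟨f, hf⟩ := exists_hocolim_desc j hT Φ hΦ
    exact ⟨f, by rw [assoc, hf]⟩
  have hinjY (Z : C) (hZ : t.IsGE Z (-n)) (f : Y ⟶ Z) (hf : (Sigma.ι X n ≫ π) ≫ f = 0) :
      f = 0 := by
    have hZ' := t.isGE_shift Z (-n) (-1) (-n + 1)
    refine hocolim_hom_ext j hT (exists_id_sub_sigmaSucc_comp_eq j
      (exists_sub_comp_eq j n fun k hk => hext k hk _ hZ')) f ?_
    exact compatible_family_eq_zero j n (fun k hk => hinj k hk Z hZ) _
      (comp_hocolim_compatible j hT f) (by rwa [← assoc])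
  obtain ⟨K, _, _, hK⟩ := distinguished_cocone_triangle (Sigma.ι X n ≫ π)
  exact (t.isLE_obj₃_iff hLE _ hK _).1 (t.isLE_obj₃_of_mor₁ _ hK _ hsurjY hinjY)
end

section
/- Let T be a triangulated category with a non-degenerate t-structure. Let (j_{−k,−k−1} : X_{−k} → X_{−k−1})_{k≥0} be a sequence such that ⊕_k X_{−k} exists in T, and assume that for all n ≥ 0 the morphism H^i(j_{−n,−n−1}) is an isomorphism for i > −n and an epimorphism for i = −n. Let Y ∈ T and let f_{−n} : X_{−n} → Y be morphisms with f_{−n−1} ∘ j_{−n,−n−1} = f_{−n} for all n ≥ 0, and assume that for every i ∈ ℤ there is M(i) such that H^i(f_{−n}) : H^i(X_{−n}) → H^i(Y) is an isomorphism for all n > M(i). Then any morphism f : hocolim_n X_{−n} → Y satisfying f ∘ j_{−n} = f_{−n} for all n induces isomorphisms H^i(f) : H^i(hocolim_n X_{−n}) → H^i(Y) for all i ∈ ℤ; in particular f is an isomorphism in T. -/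
/-!
The cone of `j m` lies in `t.le (-m - 1)`, so precomposition with `j m` is bijective on maps
into objects of `t.ge b` for `b > -m`. Through the triangle `∐ X ⟶ ∐ X ⟶ Z` defining the homotopy
colimit, maps from `Z` into such objects are the compatible families of maps from the `X k`, and
these are determined by their component at `X n`. Hence the cone of `X n ⟶ Z` lies in
`t.le (-n)`, so `Hⁱ(X n) ⟶ Hⁱ(Z)` is an isomorphism for `i ≥ 2 - n`. Comparing with `Hⁱ(f n)` for
large `n` shows that every `Hⁱ(g)` is an isomorphism, and by non-degeneracy the cone of `g` is zero.
-/

open CategoryTheory Category Limits Pretriangulated Triangulated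

universe v u v' u'

namespace HocolimCohomology

section Telescope

variable {C : Type u} [Category.{v} C] [Preadditive C] {W : C}

lemma exists_sub_comp_succ_eq_of_surjective : ∀ (n : ℕ) {X : ℕ → C} (j : ∀ k, X k ⟶ X (k + 1)),
    (∀ m, n ≤ m → Function.Surjective (fun φ : X (m + 1) ⟶ W => j m ≫ φ)) →
    ∀ (θ : ∀ k, X k ⟶ W) (α : X n ⟶ W),
      ∃ η : ∀ k, X k ⟶ W, η n = α ∧ ∀ k, η k - j k ≫ η (k + 1) = θ k
  | 0, X, j, hsurj, θ, α => by
    choose s hs using fun m => hsurj m (Nat.zero_le m)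
    refine ⟨fun k => Nat.rec (motive := fun k => X k ⟶ W) α (fun k ηk => s k (ηk - θ k)) k,
      rfl, fun k => ?_⟩
    show _ - j k ≫ s k _ = _
    rw [show j k ≫ s k _ = _ from hs k _, sub_sub_cancel]
  | n + 1, X, j, hsurj, θ, α => by
    obtain ⟨η, hηn, hη⟩ := exists_sub_comp_succ_eq_of_surjective n (fun k => j (k + 1))
      (fun m hm => hsurj (m + 1) (by omega)) (fun k => θ (k + 1)) α
    refine ⟨fun k => Nat.casesOn k (θ 0 + j 0 ≫ η 0) η, hηn, ?_⟩
    rintro (_ | k)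
    · exact add_sub_cancel_right _ _
    · exact hη k

lemma eq_zero_of_comp_succ_eq_of_injective : ∀ (n : ℕ) {X : ℕ → C} (j : ∀ k, X k ⟶ X (k + 1)),
    (∀ m, n ≤ m → Function.Injective (fun φ : X (m + 1) ⟶ W => j m ≫ φ)) →
    ∀ φ : ∀ k, X k ⟶ W, (∀ k, j k ≫ φ (k + 1) = φ k) → φ n = 0 → ∀ k, φ k = 0
  | 0, X, j, hinj, φ, hφ, h0 => by
    intro k
    induction k with
    | zero => exact h0
    | succ k ih => exact hinj k (Nat.zero_le k) (by simp only [hφ, ih, comp_zero])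
  | n + 1, X, j, hinj, φ, hφ, h0 => by
    have h := eq_zero_of_comp_succ_eq_of_injective n (fun k => j (k + 1))
      (fun m hm => hinj (m + 1) (by omega)) (fun k => φ (k + 1)) (fun k => hφ (k + 1)) h0
    rintro (_ | k)
    · rw [← hφ 0, h 0, comp_zero]
    · exact h k

variable (X : ℕ → C) (j : ∀ k, X k ⟶ X (k + 1)) [HasCoproduct X]

/-- The paper's `1 - μ`. -/
noncomputable def oneSubShift : ∐ X ⟶ ∐ X := 𝟙 (∐ X) - Sigma.desc fun k => j k ≫ Sigma.ι X (k + 1)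

lemma oneSubShift_comp_desc (φ : ∀ k, X k ⟶ W) :
    oneSubShift X j ≫ Sigma.desc φ = Sigma.desc fun k => φ k - j k ≫ φ (k + 1) := by
  ext k
  simp [oneSubShift, Preadditive.comp_sub, Preadditive.sub_comp]

lemma oneSubShift_comp_desc_eq_zero_iff (φ : ∀ k, X k ⟶ W) :
    oneSubShift X j ≫ Sigma.desc φ = 0 ↔ ∀ k, j k ≫ φ (k + 1) = φ k := by
  rw [oneSubShift_comp_desc]
  constructor
  · intro h k
    have hk : φ k - j k ≫ φ (k + 1) = 0 := by simpa using Sigma.ι X k ≫= h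
    exact (sub_eq_zero.1 hk).symm
  · intro h
    ext k
    simp [h]

lemma oneSubShift_comp_surjective (n : ℕ)
    (hsurj : ∀ m, n ≤ m → Function.Surjective (fun φ : X (m + 1) ⟶ W => j m ≫ φ)) :
    Function.Surjective (fun φ : ∐ X ⟶ W => oneSubShift X j ≫ φ) := by
  intro θ
  obtain ⟨η, -, hη⟩ :=
    exists_sub_comp_succ_eq_of_surjective n j hsurj (fun k => Sigma.ι X k ≫ θ) 0
  refine ⟨Sigma.desc η, ?_⟩
  ext k
  simp [oneSubShift_comp_desc, hη]

end Telescope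

section Pretriangulated

variable {C : Type u} [Category.{v} C] [Preadditive C] [HasZeroObject C] [HasShift C ℤ]
  [∀ n : ℤ, (shiftFunctor C n).Additive] [Pretriangulated C] {T : Triangle C}

lemma eq_zero_of_mor₂_comp_eq_zero (hT : T ∈ distTriang C) {W : C}
    (hsurj : Function.Surjective (fun φ : T.obj₂ ⟶ W⟦(-1 : ℤ)⟧ => T.mor₁ ≫ φ))
    (ψ : T.obj₃ ⟶ W) (hψ : T.mor₂ ≫ ψ = 0) : ψ = 0 := by
  obtain ⟨χ, rfl⟩ := Triangle.yoneda_exact₃ T hT ψ hψ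
  let adj := (shiftEquiv C (1 : ℤ)).toAdjunction
  obtain ⟨σ, hσ⟩ := hsurj (adj.homEquiv _ _ χ)
  have hχ : χ = T.mor₁⟦(1 : ℤ)⟧' ≫ (adj.homEquiv _ _).symm σ := by
    rw [← (adj.homEquiv _ _).symm_apply_apply χ, ← hσ]
    exact adj.homEquiv_naturality_left_symm _ _
  rw [hχ]
  exact ((reassoc_of% (comp_distTriang_mor_zero₃₁ _ hT)) _).trans zero_comp

variable (t : TStructure C)

lemma isLE_obj₃_of_comp_mor₁_injective_of_surjective (hT : T ∈ distTriang C) (a : ℤ)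
    (h : ∀ W : C, t.IsGE W (a + 1) →
      Function.Injective (fun φ : T.obj₂ ⟶ W => T.mor₁ ≫ φ) ∧
        Function.Surjective (fun φ : T.obj₂ ⟶ W⟦(-1 : ℤ)⟧ => T.mor₁ ≫ φ)) :
    t.IsLE T.obj₃ a := by
  rw [t.isLE_iff_orthogonal a (a + 1) rfl]
  intro W u hW
  obtain ⟨hinj, hsurj⟩ := h W hW
  refine eq_zero_of_mor₂_comp_eq_zero hT hsurj u (hinj ?_)
  simp only [comp_distTriang_mor_zero₁₂_assoc _ hT, zero_comp, comp_zero]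

lemma comp_mor₁_bijective_of_isLE_of_isGE (hT : T ∈ distTriang C) (a : ℤ) [t.IsLE T.obj₃ a]
    (W : C) [t.IsGE W (a + 2)] : Function.Bijective (fun φ : T.obj₂ ⟶ W => T.mor₁ ≫ φ) := by
  constructor
  · intro φ₁ φ₂ h
    obtain ⟨ρ, hρ⟩ := Triangle.yoneda_exact₂ T hT (φ₁ - φ₂)
      (by rw [Preadditive.comp_sub]; exact sub_eq_zero.2 h)
    rw [t.zero ρ a (a + 2), comp_zero] at hρ
    exact sub_eq_zero.1 hρ
  · intro α
    have : t.IsLE T.invRotate.obj₁ (a + 1) := t.isLE_shift T.obj₃ a (-1) (a + 1)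
    obtain ⟨φ, hφ⟩ := Triangle.yoneda_exact₂ _ (inv_rot_of_distTriang _ hT) α
      (t.zero _ (a + 1) (a + 2))
    exact ⟨φ, hφ.symm⟩

variable {A : Type u'} [Category.{v'} A] [Abelian A] (F : C ⥤ A) [F.IsHomological]
  [F.ShiftSequence ℤ]

lemma isZero_shift_obj₃_of_epi_of_mono (hT : T ∈ distTriang C) (n₀ n₁ : ℤ) (h : n₀ + 1 = n₁)
    [Epi ((F.shift n₀).map T.mor₁)] [Mono ((F.shift n₁).map T.mor₁)] :
    IsZero ((F.shift n₀).obj T.obj₃) :=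
  (F.homologySequence_exact₃ _ hT n₀ n₁ h).isZero_X₂_iff.2
    ⟨(F.homologySequence_epi_shift_map_mor₁_iff _ hT n₀).1 inferInstance,
      (F.homologySequence_mono_shift_map_mor₁_iff _ hT n₀ n₁ h).1 inferInstance⟩

lemma isIso_shift_map_mor₁_of_isZero (hT : T ∈ distTriang C) (n₀ n₁ : ℤ) (h : n₀ + 1 = n₁)
    (h₀ : IsZero ((F.shift n₀).obj T.obj₃)) (h₁ : IsZero ((F.shift n₁).obj T.obj₃)) :
    IsIso ((F.shift n₁).map T.mor₁) := by
  have := (F.homologySequence_mono_shift_map_mor₁_iff _ hT n₀ n₁ h).2 (h₀.eq_of_src _ _)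
  have := (F.homologySequence_epi_shift_map_mor₁_iff _ hT n₁).2 (h₁.eq_of_tgt _ _)
  exact isIso_of_mono_of_epi _

variable {t F}

lemma isLE_obj₃_of_epi_of_isIso
    (hLE : ∀ (n : ℤ) (X : C), t.le n X ↔ ∀ i : ℤ, n < i → IsZero ((F.shift i).obj X))
    (hT : T ∈ distTriang C) (n : ℤ) (hepi : Epi ((F.shift n).map T.mor₁))
    (hiso : ∀ i : ℤ, n < i → IsIso ((F.shift i).map T.mor₁)) :
    t.IsLE T.obj₃ (n - 1) := by
  refine ⟨(hLE _ _).2 fun i hi => ?_⟩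
  have : Epi ((F.shift i).map T.mor₁) := by
    obtain rfl | hni := eq_or_lt_of_le (show n ≤ i by omega)
    · exact hepi
    · have := hiso i hni
      infer_instance
  have := hiso (i + 1) (by omega)
  exact isZero_shift_obj₃_of_epi_of_mono F hT i (i + 1) rfl

lemma isIso_of_forall_isIso_shift_map
    (hLE : ∀ (n : ℤ) (X : C), t.le n X ↔ ∀ i : ℤ, n < i → IsZero ((F.shift i).obj X))
    (hGE : ∀ (n : ℤ) (X : C), t.ge n X ↔ ∀ i : ℤ, i < n → IsZero ((F.shift i).obj X))
    {X Y : C} (g : X ⟶ Y) (hg : ∀ i : ℤ, IsIso ((F.shift i).map g)) : IsIso g := by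
  obtain ⟨Q, p, q, hT⟩ := distinguished_cocone_triangle g
  have hQ (i : ℤ) : IsZero ((F.shift i).obj Q) := by
    have : IsIso ((F.shift i).map (Triangle.mk g p q).mor₁) := hg i
    have : IsIso ((F.shift (i + 1)).map (Triangle.mk g p q).mor₁) := hg (i + 1)
    exact isZero_shift_obj₃_of_epi_of_mono F hT i (i + 1) rfl
  have : t.IsLE Q 0 := ⟨(hLE 0 Q).2 fun i _ => hQ i⟩
  have : t.IsGE Q 1 := ⟨(hGE 1 Q).2 fun i _ => hQ i⟩
  exact (Triangle.isZero₃_iff_isIso₁ _ hT).1 (t.isZero Q 0 1)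

section Hocolim

variable (X : ℕ → C) (j : ∀ k, X k ⟶ X (k + 1)) [HasCoproduct X] {Z : C} {π : ∐ X ⟶ Z}
  {δ : Z ⟶ (∐ X)⟦(1 : ℤ)⟧}

lemma hocolim_ι_comp_surjective (hT : Triangle.mk (oneSubShift X j) π δ ∈ distTriang C)
    (n : ℕ) {W : C}
    (hsurj : ∀ m, n ≤ m → Function.Surjective (fun φ : X (m + 1) ⟶ W => j m ≫ φ)) :
    Function.Surjective (fun ψ : Z ⟶ W => (Sigma.ι X n ≫ π) ≫ ψ) := by
  intro α
  obtain ⟨η, hηn, hη⟩ := exists_sub_comp_succ_eq_of_surjective n j hsurj 0 α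
  obtain ⟨ψ, hψ⟩ : ∃ ψ : Z ⟶ W, Sigma.desc η = π ≫ ψ := Triangle.yoneda_exact₂ _ hT _
    ((oneSubShift_comp_desc_eq_zero_iff X j η).2 fun k => (sub_eq_zero.1 (hη k)).symm)
  exact ⟨ψ, by simpa [hηn] using (Sigma.ι X n ≫= hψ).symm⟩

lemma hocolim_ι_comp_injective (hT : Triangle.mk (oneSubShift X j) π δ ∈ distTriang C)
    (n : ℕ) {W : C}
    (hinj : ∀ m, n ≤ m → Function.Injective (fun φ : X (m + 1) ⟶ W => j m ≫ φ))
    (hsurj : ∀ m, n ≤ m →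
      Function.Surjective (fun φ : X (m + 1) ⟶ W⟦(-1 : ℤ)⟧ => j m ≫ φ)) :
    Function.Injective (fun ψ : Z ⟶ W => (Sigma.ι X n ≫ π) ≫ ψ) := by
  refine (injective_iff_map_eq_zero (Preadditive.leftComp W (Sigma.ι X n ≫ π))).2 fun ψ hψ => ?_
  have hdesc : Sigma.desc (fun k => Sigma.ι X k ≫ π ≫ ψ) = π ≫ ψ := by
    ext k
    simp
  have hcompat := (oneSubShift_comp_desc_eq_zero_iff X j _).1
    (by rw [hdesc]; exact comp_distTriang_mor_zero₁₂_assoc _ hT ψ ▸ zero_comp)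
  have hπψ : π ≫ ψ = 0 := by
    ext k
    simpa using eq_zero_of_comp_succ_eq_of_injective n j hinj (fun k => Sigma.ι X k ≫ π ≫ ψ)
      hcompat (by rw [← assoc]; exact hψ) k
  exact eq_zero_of_mor₂_comp_eq_zero hT (oneSubShift_comp_surjective X j n hsurj) ψ hπψ

lemma isLE_cone_hocolim_ι (hT : Triangle.mk (oneSubShift X j) π δ ∈ distTriang C) (n : ℕ)
    (a : ℤ) (hbij : ∀ m, n ≤ m → ∀ W : C, t.IsGE W (a + 1) →
      Function.Bijective (fun φ : X (m + 1) ⟶ W => j m ≫ φ))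
    {Q : C} {c : Z ⟶ Q} {d : Q ⟶ (X n)⟦(1 : ℤ)⟧}
    (hT' : Triangle.mk (Sigma.ι X n ≫ π) c d ∈ distTriang C) : t.IsLE Q a := by
  refine isLE_obj₃_of_comp_mor₁_injective_of_surjective t hT' a fun W hW => ?_
  have := t.isGE_shift W (a + 1) (-1) (a + 2)
  have : t.IsGE (W⟦(-1 : ℤ)⟧) (a + 1) := t.isGE_of_ge _ (a + 1) (a + 2)
  exact ⟨hocolim_ι_comp_injective X j hT n (fun m hm => (hbij m hm W hW).1)
      (fun m hm => (hbij m hm _ this).2),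
    hocolim_ι_comp_surjective X j hT n (fun m hm => (hbij m hm _ this).2)⟩

lemma isIso_shift_map_hocolim_ι
    (hLE : ∀ (n : ℤ) (X : C), t.le n X ↔ ∀ i : ℤ, n < i → IsZero ((F.shift i).obj X))
    (hiso : ∀ (n : ℕ) (i : ℤ), -(n : ℤ) < i → IsIso ((F.shift i).map (j n)))
    (hepi : ∀ n : ℕ, Epi ((F.shift (-(n : ℤ))).map (j n)))
    (hT : Triangle.mk (oneSubShift X j) π δ ∈ distTriang C) (n : ℕ) (i : ℤ)
    (hi : 2 - (n : ℤ) ≤ i) : IsIso ((F.shift i).map (Sigma.ι X n ≫ π)) := by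
  have hbij : ∀ m, n ≤ m → ∀ W : C, t.IsGE W (-(n : ℤ) + 1) →
      Function.Bijective (fun φ : X (m + 1) ⟶ W => j m ≫ φ) := by
    intro m hm W hW
    obtain ⟨Cm, c, d, hTm⟩ := distinguished_cocone_triangle (j m)
    have := isLE_obj₃_of_epi_of_isIso hLE hTm _ (hepi m) (hiso m)
    have : t.IsGE W (-(m : ℤ) - 1 + 2) := t.isGE_of_ge W _ (-(n : ℤ) + 1)
    exact comp_mor₁_bijective_of_isLE_of_isGE t hTm (-(m : ℤ) - 1) W
  obtain ⟨Q, c, d, hT'⟩ := distinguished_cocone_triangle (Sigma.ι X n ≫ π)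
  have := isLE_cone_hocolim_ι X j hT n (-(n : ℤ)) hbij hT'
  have hQ := (hLE _ Q).1 (t.le_of_isLE Q (-(n : ℤ)))
  exact isIso_shift_map_mor₁_of_isZero F hT' (i - 1) i (by omega) (hQ _ (by omega))
    (hQ _ (by omega))

end Hocolim

end Pretriangulated

end HocolimCohomology

open HocolimCohomology in
/-- `F` plays the role of `H⁰`, with `Hⁱ(X) = F.obj (X⟦i⟧)`; `hLE` and `hGE` say that the aisles
are detected by this cohomology, which encodes non-degeneracy. The object `X k` stands for the
paper's `X₋ₖ`. -/
theorem statement3 {C : Type u} [Category.{v} C] [Preadditive C] [HasZeroObject C]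
    [HasShift C ℤ] [∀ n : ℤ, (shiftFunctor C n).Additive] [Pretriangulated C]
    {A : Type u'} [Category.{v'} A] [Abelian A]
    (t : TStructure C) (F : C ⥤ A) [F.IsHomological]
    (hLE : ∀ (n : ℤ) (X : C), t.le n X ↔ ∀ i : ℤ, n < i → IsZero (F.obj (X⟦i⟧)))
    (hGE : ∀ (n : ℤ) (X : C), t.ge n X ↔ ∀ i : ℤ, i < n → IsZero (F.obj (X⟦i⟧)))
    (X : ℕ → C) (j : ∀ k : ℕ, X k ⟶ X (k + 1)) [HasCoproduct X]
    (hiso : ∀ (n : ℕ) (i : ℤ), -(n : ℤ) < i → IsIso (F.map ((j n)⟦i⟧')))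
    (hepi : ∀ n : ℕ, Epi (F.map ((j n)⟦-(n : ℤ)⟧')))
    (Y : C) (f : ∀ n : ℕ, X n ⟶ Y) (hf : ∀ n : ℕ, j n ≫ f (n + 1) = f n)
    (M : ℤ → ℕ) (hM : ∀ (i : ℤ) (n : ℕ), M i < n → IsIso (F.map ((f n)⟦i⟧')))
    (Z : C) (π : (∐ X) ⟶ Z) (δ : Z ⟶ (∐ X)⟦(1 : ℤ)⟧)
    (hT : Triangle.mk (𝟙 (∐ X) - Sigma.desc fun k => j k ≫ Sigma.ι X (k + 1)) π δ ∈
      distTriang C)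
    (g : Z ⟶ Y) (hg : ∀ n : ℕ, (Sigma.ι X n ≫ π) ≫ g = f n) :
    (∀ i : ℤ, IsIso (F.map (g⟦i⟧'))) ∧ IsIso g := by
  let : F.ShiftSequence ℤ := Functor.ShiftSequence.tautological _ _
  have hgi (i : ℤ) : IsIso (F.map (g⟦i⟧')) := by
    obtain ⟨n, hMn, hn⟩ : ∃ n : ℕ, M i < n ∧ 2 - (n : ℤ) ≤ i :=
      ⟨M i + 1 + (2 - i).toNat, by omega, by omega⟩
    have : IsIso (F.map ((Sigma.ι X n ≫ π)⟦i⟧')) :=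
      isIso_shift_map_hocolim_ι (t := t) (F := F) X j hLE hiso hepi hT n i hn
    have : IsIso (F.map ((Sigma.ι X n ≫ π)⟦i⟧') ≫ F.map (g⟦i⟧')) := by
      rw [← F.map_comp, ← Functor.map_comp, hg n]
      exact hM i n hMn
    exact IsIso.of_isIso_comp_left (F.map ((Sigma.ι X n ≫ π)⟦i⟧')) _
  exact ⟨hgi, isIso_of_forall_isIso_shift_map (t := t) (F := F) hLE hGE g hgi⟩
end

section
/- Let T be a triangulated category with a t-structure which has derived projectives. Then for all projective objects P, Q of the heart T^♥ and all i ∈ ℤ, one has T(S(P), S(Q)[i]) ≅ T^♥(P,Q) if i = 0 and T(S(P), S(Q)[i]) = 0 if i > 0. In particular P ↦ S(P) defines a fully faithful functor from the category Proj(T^♥) of projective objects of the heart to T. -/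
open CategoryTheory Category Limits Pretriangulated Triangulated

universe v u

variable {C : Type u} [Category.{v} C] [Preadditive C] [HasZeroObject C]
  [HasShift C ℤ] [∀ n : ℤ, (shiftFunctor C n).Additive] [Pretriangulated C]

/-- The heart `T^♥ = T_{≤0} ∩ T_{≥0}` of a t-structure, as a full subcategory. -/
abbrev THeart (t : TStructure C) := ObjectProperty.FullSubcategory (fun X : C => t.le 0 X ∧ t.ge 0 X)

/-- The inclusion `T^♥ ⥤ C`. -/
abbrev THeartIncl (t : TStructure C) : THeart t ⥤ C :=
  ObjectProperty.ι (fun X : C => t.le 0 X ∧ t.ge 0 X)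

/-- The data of the cohomological functor `H⁰ = τ≤0 τ≥0 : C ⥤ T^♥` associated to a
t-structure `t`, axiomatized by its characteristic properties: it is a homological
functor restricting to the identity on the heart, it kills `T_{≥1}` and `T_{≤-1}`,
and it realizes the truncation adjunctions on the aisles
(`Hom(X, Y) ≅ Hom(H⁰X, Y)` for `X ∈ T_{≤0}`, `Y ∈ T^♥`, and dually). -/
structure TCohomology (t : TStructure C) [Abelian (THeart t)] where
  H : C ⥤ THeart t
  homological : H.IsHomological
  restriction : THeartIncl t ⋙ H ≅ 𝟭 (THeart t)
  zero_of_ge : ∀ X : C, t.ge 1 X → IsZero (H.obj X)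
  zero_of_le : ∀ X : C, t.le (-1) X → IsZero (H.obj X)
  bij_le : ∀ (X : C) (Y : THeart t), t.le 0 X →
    Function.Bijective (fun f : X ⟶ Y.obj => H.map f ≫ restriction.hom.app Y)
  bij_ge : ∀ (X : C) (Y : THeart t), t.ge 0 X →
    Function.Bijective (fun f : Y.obj ⟶ X => restriction.inv.app Y ≫ H.map f)

/-- `SP` is *the derived projective associated to* `P ∈ T^♥` when it corepresents the
functor `T^♥(P, H⁰(-))`, i.e. `T(SP, X) ≅ T^♥(P, H⁰X)` naturally in `X`. -/
def IsDerivedProjective (t : TStructure C) [Abelian (THeart t)] (h : TCohomology t)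
    (P : THeart t) (SP : C) : Prop :=
  ∃ e : ∀ X : C, (SP ⟶ X) ≃ (P ⟶ h.H.obj X),
    ∀ (X Y : C) (f : X ⟶ Y) (g : SP ⟶ X), e Y (g ≫ f) = e X g ≫ h.H.map f

/-!
A derived projective `S(Q)` is left orthogonal to `T_{≥1}`, because `H⁰` kills `T_{≥1}`; hence it
lies in `T_{≤0}`. There `H⁰` is left adjoint to the inclusion of the heart, so `Q` and `H⁰ S(Q)`
both corepresent `Hom(S(Q), -)` on the heart and the unit `Q ⟶ H⁰ S(Q)` is an isomorphism.
Consequently `T(S(P), S(Q)[i]) ≅ T^♥(P, H⁰(S(Q)[i]))` vanishes for `i > 0` (as `S(Q)[i] ∈ T_{≤-1}`)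
and is `T^♥(P, Q)` for `i = 0`. The functor `P ↦ S(P)` is the partial left adjoint of `H⁰`,
which is fully faithful wherever its unit is invertible.
-/

open Opposite

namespace CategoryTheory

section Corepresentable

variable {D A : Type*} [Category D] [Category A] (F : D ⥤ A)

lemma Functor.CorepresentableBy.hom_ext_of_isZero {P : A} {S : D}
    (e : (F ⋙ coyoneda.obj (op P)).CorepresentableBy S) {X : D} (hX : IsZero (F.obj X))
    (f g : S ⟶ X) : f = g :=
  e.homEquiv.injective (hX.eq_of_tgt _ _)

lemma Functor.CorepresentableBy.homEquiv_id_comp_map {P : A} {S : D}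
    (e : (F ⋙ coyoneda.obj (op P)).CorepresentableBy S) {X : D} (f : S ⟶ X) :
    e.homEquiv (𝟙 S) ≫ F.map f = e.homEquiv f := by
  simpa using (e.homEquiv_comp f (𝟙 S)).symm

/-- Both `P` and `F S` corepresent `Y ↦ Hom(S, ι Y)`, so by Yoneda the unit `P ⟶ F S` is an
isomorphism. -/
lemma Functor.CorepresentableBy.isIso_homEquiv_id (ι : A ⥤ D) (ρ : ι ⋙ F ≅ 𝟭 A)
    {P : A} {S : D} (e : (F ⋙ coyoneda.obj (op P)).CorepresentableBy S)
    (hS : ∀ Y : A, Function.Bijective (fun f : S ⟶ ι.obj Y => F.map f ≫ ρ.hom.app Y)) :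
    IsIso (e.homEquiv (𝟙 S)) := by
  refine isIso_of_coyoneda_map_bijective _ fun Y => ?_
  refine (Function.Bijective.of_comp_iff _ (hS Y)).1 ?_
  have hcomp : (fun x => e.homEquiv (𝟙 S) ≫ x) ∘ (fun f : S ⟶ ι.obj Y => F.map f ≫ ρ.hom.app Y)
      = (fun x => x ≫ ρ.hom.app Y) ∘ e.homEquiv := by
    funext f
    simp [← Category.assoc, e.homEquiv_id_comp_map]
  exact hcomp ▸ ((isIso_iff_yoneda_map_bijective _).1 inferInstance P).comp e.homEquiv.bijective

lemma Functor.partialLeftAdjointMap_bijective {X Y : F.PartialLeftAdjointSource}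
    [IsIso (F.partialLeftAdjointHomEquiv (𝟙 (F.partialLeftAdjointObj Y)))] :
    Function.Bijective (F.partialLeftAdjointMap : (X ⟶ Y) → _) := by
  have hcomp : F.partialLeftAdjointHomEquiv ∘ (F.partialLeftAdjointMap : (X ⟶ Y) → _)
      = (fun g => g ≫ F.partialLeftAdjointHomEquiv (𝟙 _)) ∘ (ObjectProperty.ι _).map := by
    funext f
    exact F.partialLeftAdjointHomEquiv_map f
  refine (Function.Bijective.of_comp_iff' F.partialLeftAdjointHomEquiv.bijective _).1 ?_
  exact hcomp ▸ ((isIso_iff_yoneda_map_bijective _).1 inferInstance X.obj).comp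
    ((ObjectProperty.fullyFaithfulι _).map_bijective X Y)

lemma Functor.map_bijective_ιOfLE_comp_partialLeftAdjoint {Q : ObjectProperty A}
    (hQ : Q ≤ F.leftAdjointObjIsDefined)
    (hunit : ∀ X : Q.FullSubcategory, IsIso (F.partialLeftAdjointHomEquiv
      (𝟙 (F.partialLeftAdjointObj ((ObjectProperty.ιOfLE hQ).obj X)))))
    (X Y : Q.FullSubcategory) :
    Function.Bijective ((ObjectProperty.ιOfLE hQ ⋙ F.partialLeftAdjoint).map : (X ⟶ Y) → _) :=
  have := hunit Y
  F.partialLeftAdjointMap_bijective.comp ((ObjectProperty.fullyFaithfulιOfLE hQ).map_bijective X Y)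

end Corepresentable

end CategoryTheory

namespace TCohomology

variable {t : TStructure C} [Abelian (THeart t)] (h : TCohomology t)

lemma isDerivedProjective_iff {P : THeart t} {SP : C} :
    IsDerivedProjective t h P SP ↔
      Nonempty ((h.H ⋙ coyoneda.obj (op P)).CorepresentableBy SP) :=
  ⟨fun ⟨e, he⟩ => ⟨⟨e _, fun f g => he _ _ f g⟩⟩,
    fun ⟨e⟩ => ⟨fun _ => e.homEquiv, fun _ _ f g => e.homEquiv_comp f g⟩⟩

variable {h} {P : THeart t} {SP : C}

lemma le_zero_of_corepresentableBy
    (e : (h.H ⋙ coyoneda.obj (op P)).CorepresentableBy SP) : t.le 0 SP := by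
  rw [t.le_iff_isLE, t.isLE_iff_orthogonal 0 1 rfl]
  intro Y f hY
  exact e.hom_ext_of_isZero _ (h.zero_of_ge Y (t.ge_of_isGE Y 1)) f 0

lemma isIso_homEquiv_id
    (e : (h.H ⋙ coyoneda.obj (op P)).CorepresentableBy SP) : IsIso (e.homEquiv (𝟙 SP)) :=
  e.isIso_homEquiv_id _ (THeartIncl t) h.restriction
    fun Y => h.bij_le SP Y (le_zero_of_corepresentableBy e)

lemma hom_shift_eq_zero
    (e : (h.H ⋙ coyoneda.obj (op P)).CorepresentableBy SP) {X : C} (hX : t.le 0 X)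
    {i : ℤ} (hi : 0 < i) (g : SP ⟶ X⟦i⟧) : g = 0 :=
  e.hom_ext_of_isZero _
    (h.zero_of_le _ (t.le_monotone (by omega) _ (t.le_shift 0 i (-i) (by omega) X hX))) g 0

end TCohomology

/-- Let `C` be a triangulated category with a t-structure `t` which has
derived projectives. Then for all projectives `P, Q` of the heart and corresponding
derived projectives `SP, SQ`: `T(SP, SQ⟦i⟧) = 0` for `i > 0` and `T(SP, SQ) ≅ T^♥(P, Q)`.
In particular the assignment `P ↦ S(P)` can be realized as a fully faithful functor from
the category of projective objects of the heart to `C`. -/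
theorem statement11 (t : TStructure C) [Abelian (THeart t)] (h : TCohomology t)
    (hDP : ∀ P : THeart t, Projective P → ∃ SP : C, IsDerivedProjective t h P SP) :
    (∀ (P Q : THeart t), Projective P → Projective Q → ∀ SP SQ : C,
      IsDerivedProjective t h P SP → IsDerivedProjective t h Q SQ →
        (∀ i : ℤ, 0 < i → ∀ g : SP ⟶ SQ⟦i⟧, g = 0) ∧
        Nonempty ((SP ⟶ SQ) ≃ (P ⟶ Q))) ∧
    ∃ F : ObjectProperty.FullSubcategory (fun P : THeart t => Projective P) ⥤ C,
      F.Full ∧ F.Faithful ∧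
        ∀ P : ObjectProperty.FullSubcategory (fun P : THeart t => Projective P),
          IsDerivedProjective t h P.obj (F.obj P) := by
  refine ⟨fun P Q _ _ SP SQ hSP hSQ => ?_, ?_⟩
  · obtain ⟨eP⟩ := h.isDerivedProjective_iff.1 hSP
    obtain ⟨eQ⟩ := h.isDerivedProjective_iff.1 hSQ
    have := TCohomology.isIso_homEquiv_id eQ
    exact ⟨fun i hi g => TCohomology.hom_shift_eq_zero eP
        (TCohomology.le_zero_of_corepresentableBy eQ) hi g,
      ⟨eP.homEquiv.trans ((Iso.refl P).homCongr (asIso (eQ.homEquiv (𝟙 SQ))).symm)⟩⟩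
  · have hProj : (fun P : THeart t => Projective P) ≤ h.H.leftAdjointObjIsDefined := by
      intro P hP
      obtain ⟨SP, hSP⟩ := hDP P hP
      obtain ⟨e⟩ := h.isDerivedProjective_iff.1 hSP
      exact e.isCorepresentable
    obtain ⟨hFF⟩ := (Functor.FullyFaithful.nonempty_iff_map_bijective _).2
      (h.H.map_bijective_ιOfLE_comp_partialLeftAdjoint hProj
        fun X => TCohomology.isIso_homEquiv_id _)
    exact ⟨_, hFF.full, hFF.faithful,
      fun P => have := (h.H.leftAdjointObjIsDefined_iff _).1 (hProj _ P.property)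
        h.isDerivedProjective_iff.2 ⟨Functor.corepresentableBy _⟩⟩
end

section
/- Let T be a triangulated category with a t-structure which has derived projectives, and let (P_i)_{i∈I} be a family of projective objects of the heart T^♥ such that the coproduct P = ⊕_i P_i exists in T. Then P ∈ T_{≤0}, the object H^0(P) is a coproduct of the family (P_i) in T^♥ (in particular H^0(P) is projective in T^♥), and S(H^0(P)) ≅ ⊕_i S(P_i) in T; in other words, the derived projective functor S(−) commutes with such coproducts. -/
open CategoryTheory Category Limits Pretriangulated Triangulated

universe v u

variable {C : Type u} [Category.{v} C] [Preadditive C] [HasZeroObject C]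
  [HasShift C ℤ] [∀ n : ℤ, (shiftFunctor C n).Additive] [Pretriangulated C]

/-!
`T_{≤0}` is the left orthogonal of `T_{≥1}`, so it is closed under coproducts and contains
`P = ∐ Pᵢ`. On `T_{≤0}` the functor `H⁰` is left adjoint to the inclusion of the heart, so
`H⁰ P` is a coproduct of the `Pᵢ` in the heart, hence projective. A derived projective `S(Q)`
corepresents `Hom(Q, H⁰ -)`, and
`Hom(S(H⁰ P), -) ≃ Hom(H⁰ P, H⁰ -) ≃ Π Hom(Pᵢ, H⁰ -) ≃ Π Hom(S(Pᵢ), -)`.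
-/

namespace CategoryTheory

section Cofan

variable {D : Type*} [Category D] {I : Type*} {A : I → D}

lemma Limits.Cofan.nonempty_isColimit_iff_bijective (c : Cofan A) :
    Nonempty (IsColimit c) ↔
      ∀ Y : D, Function.Bijective fun u : c.pt ⟶ Y => fun i => c.inj i ≫ u := by
  constructor
  · rintro ⟨hc⟩ Y
    refine ⟨fun u v huv => Cofan.IsColimit.hom_ext hc u v fun i => congrFun huv i, fun f => ?_⟩
    exact ⟨Cofan.IsColimit.desc hc f, funext fun i => Cofan.IsColimit.fac hc f i⟩
  · intro hbij
    let e : ∀ Y, (c.pt ⟶ Y) ≃ (∀ i, A i ⟶ Y) := fun Y => Equiv.ofBijective _ (hbij Y)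
    refine ⟨Cofan.IsColimit.mk c (fun s => (e s.pt).symm s.inj) (fun s i => ?_)
      (fun s m hm => ?_)⟩
    · exact congrFun ((e s.pt).apply_symm_apply s.inj) i
    · exact (e s.pt).eq_symm_apply.2 (funext hm)

lemma Projective.of_isColimit_cofan [∀ i, Projective (A i)] {c : Cofan A} (hc : IsColimit c) :
    Projective c.pt where
  factors f e _ := by
    choose g hg using fun i => Projective.factors (c.inj i ≫ f) e
    exact ⟨Cofan.IsColimit.desc hc g, Cofan.IsColimit.hom_ext hc _ _ fun i => by simp [hg]⟩

end Cofan

lemma Functor.CorepresentableBy.nonempty_isColimit_cofan {C D : Type*} [Category C]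
    [Category D] (H : C ⥤ D) {I : Type*} {P : I → D} {c : Cofan P} (hc : IsColimit c)
    {SP : I → C} {SQ : C}
    (eP : ∀ i, (H ⋙ coyoneda.obj (Opposite.op (P i))).CorepresentableBy (SP i))
    (eQ : (H ⋙ coyoneda.obj (Opposite.op c.pt)).CorepresentableBy SQ) :
    ∃ g : ∀ i, SP i ⟶ SQ, Nonempty (IsColimit (Cofan.mk SQ g)) := by
  let g : ∀ i, SP i ⟶ SQ := fun i => (eP i).homEquiv.symm (c.inj i ≫ eQ.homEquiv (𝟙 SQ))
  have hg : ∀ {Y : C} (u : SQ ⟶ Y) (i : I),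
      (eP i).homEquiv (g i ≫ u) = c.inj i ≫ eQ.homEquiv u := by
    intro Y u i
    rw [(eP i).homEquiv_comp, Equiv.apply_symm_apply, eQ.homEquiv_eq u]
    simp
  refine ⟨g, (Cofan.nonempty_isColimit_iff_bijective _).2 fun Y => ?_⟩
  have hcomp : (fun f i => (eP i).homEquiv (f i)) ∘ (fun u : SQ ⟶ Y => fun i => g i ≫ u) =
      (fun v : c.pt ⟶ H.obj Y => fun i => c.inj i ≫ v) ∘ eQ.homEquiv :=
    funext fun u => funext fun i => hg u i
  have hc' := (Cofan.nonempty_isColimit_iff_bijective c).1 ⟨hc⟩ (H.obj Y)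
  refine (Function.Bijective.of_comp_iff' ?_ _).1 (hcomp ▸ hc'.comp eQ.homEquiv.bijective)
  exact (Equiv.piCongrRight fun i => (eP i).homEquiv).bijective

lemma Triangulated.TStructure.le_sigma (t : TStructure C) {I : Type*} (X : I → C)
    [HasCoproduct X] (n : ℤ) (hX : ∀ i, t.le n (X i)) : t.le n (∐ X) := by
  rw [t.le_iff_isLE, t.isLE_iff_orthogonal n (n + 1) rfl]
  intro Y f _
  refine Sigma.hom_ext _ _ fun i => ?_
  have := (t.le_iff_isLE _ _).1 (hX i)
  rw [comp_zero]
  exact t.zero _ n (n + 1)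

end CategoryTheory

section Heart

variable {t : TStructure C} [Abelian (THeart t)]

lemma isDerivedProjective_iff (h : TCohomology t) (P : THeart t) (SP : C) :
    IsDerivedProjective t h P SP ↔
      Nonempty ((h.H ⋙ coyoneda.obj (Opposite.op P)).CorepresentableBy SP) :=
  ⟨fun ⟨e, he⟩ => ⟨⟨fun {X} => e X, fun f g => he _ _ f g⟩⟩,
    fun ⟨r⟩ => ⟨fun _ => r.homEquiv, fun _ _ f g => r.homEquiv_comp f g⟩⟩

namespace TCohomology

variable (h : TCohomology t)

lemma restriction_inv_app_map_hom_app {A Y : THeart t} (f : A.obj ⟶ Y.obj) :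
    h.restriction.inv.app A ≫ h.H.map f ≫ h.restriction.hom.app Y = ObjectProperty.homMk f := by
  simpa using (h.restriction.inv.naturality_assoc (ObjectProperty.homMk f)
    (h.restriction.hom.app Y)).symm

lemma nonempty_isColimit_cofan_map {I : Type*} {P : I → THeart t}
    {c : Cofan fun i => (P i).obj} (hc : IsColimit c) (hle : t.le 0 c.pt) :
    Nonempty (IsColimit (Cofan.mk (h.H.obj c.pt)
      fun i => h.restriction.inv.app (P i) ≫ h.H.map (c.inj i))) := by
  rw [Cofan.nonempty_isColimit_iff_bijective]
  intro Y
  let e : (c.pt ⟶ Y.obj) ≃ (h.H.obj c.pt ⟶ Y) := Equiv.ofBijective _ (h.bij_le c.pt Y hle)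
  have hcomp : (fun u i => (h.restriction.inv.app (P i) ≫ h.H.map (c.inj i)) ≫ u) ∘ e =
      (fun f i => ObjectProperty.homMk (f i)) ∘ fun ψ i => c.inj i ≫ ψ :=
    funext fun ψ => funext fun i => by
      simp [e, ← h.restriction_inv_app_map_hom_app]
  have hHom : Function.Bijective
      fun (f : ∀ i, (P i).obj ⟶ Y.obj) i => ObjectProperty.homMk (f i) :=
    (Equiv.piCongrRight fun i => (ObjectProperty.fullyFaithfulι _).homEquiv.symm).bijective
  exact (Function.Bijective.of_comp_iff _ e.bijective).1
    (hcomp ▸ hHom.comp ((Cofan.nonempty_isColimit_iff_bijective c).1 ⟨hc⟩ Y.obj))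

end TCohomology

end Heart

theorem statement12_general (t : TStructure C) [Abelian (THeart t)] (h : TCohomology t)
    {I : Type*} (P : I → THeart t) (hP : ∀ i, Projective (P i))
    [HasCoproduct fun i => (P i).obj] :
    t.le 0 (∐ fun i => (P i).obj) ∧
    Nonempty (IsColimit (Cofan.mk (h.H.obj (∐ fun i => (P i).obj))
      (fun i => h.restriction.inv.app (P i) ≫
        h.H.map (Sigma.ι (fun i => (P i).obj) i)))) ∧
    Projective (h.H.obj (∐ fun i => (P i).obj)) ∧
    (∀ (SP : I → C) (SQ : C), (∀ i, IsDerivedProjective t h (P i) (SP i)) →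
      IsDerivedProjective t h (h.H.obj (∐ fun i => (P i).obj)) SQ →
        ∃ g : ∀ i, SP i ⟶ SQ, Nonempty (IsColimit (Cofan.mk SQ g))) := by
  have hle : t.le 0 (∐ fun i => (P i).obj) := t.le_sigma _ 0 fun i => (P i).property.1
  obtain ⟨hH⟩ := h.nonempty_isColimit_cofan_map (coproductIsCoproduct fun i => (P i).obj) hle
  refine ⟨hle, ⟨hH⟩, Projective.of_isColimit_cofan (A := P) hH, fun SP SQ hSP hSQ => ?_⟩
  exact Functor.CorepresentableBy.nonempty_isColimit_cofan h.H hH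
    (fun i => ((isDerivedProjective_iff h _ _).1 (hSP i)).some)
    ((isDerivedProjective_iff h _ _).1 hSQ).some

/-- Let `C` be a triangulated category with a t-structure `t` which has
derived projectives, and let `(Pᵢ)ᵢ` be a family of projective objects of the heart such
that the coproduct `P = ∐ᵢ Pᵢ` exists in `C`. Then `P ∈ T_{≤0}`, the object `H⁰(P)` is a
coproduct of the family `(Pᵢ)` in the heart (in particular it is projective), and for any
derived projectives `SPᵢ` of the `Pᵢ` and `SQ` of `H⁰(P)`, the object `SQ` is a coproduct
of the `SPᵢ` in `C` (i.e. `S(H⁰(P)) ≅ ⊕ᵢ S(Pᵢ)`: `S(-)` commutes with such coproducts). -/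
theorem statement12 (t : TStructure C) [Abelian (THeart t)] (h : TCohomology t)
    (hDP : ∀ P : THeart t, Projective P → ∃ SP : C, IsDerivedProjective t h P SP)
    {I : Type*} (P : I → THeart t) (hP : ∀ i, Projective (P i))
    [HasCoproduct fun i => (P i).obj] :
    t.le 0 (∐ fun i => (P i).obj) ∧
    Nonempty (IsColimit (Cofan.mk (h.H.obj (∐ fun i => (P i).obj))
      (fun i => h.restriction.inv.app (P i) ≫
        h.H.map (Sigma.ι (fun i => (P i).obj) i)))) ∧
    Projective (h.H.obj (∐ fun i => (P i).obj)) ∧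
    (∀ (SP : I → C) (SQ : C), (∀ i, IsDerivedProjective t h (P i) (SP i)) →
      IsDerivedProjective t h (h.H.obj (∐ fun i => (P i).obj)) SQ →
        ∃ g : ∀ i, SP i ⟶ SQ, Nonempty (IsColimit (Cofan.mk SQ g))) :=
  statement12_general t h P hP
end

section
/- Let F : T → S be an exact functor between triangulated categories with t-structures, and assume both T and S have derived projectives. If F admits a t-exact right adjoint G, then F preserves derived projectives: for every projective object P of T^♥ one has F(S_T(P)) ≅ S_S(F^♥(P)), where F^♥ is the induced functor between the hearts; in particular F restricts to a functor DGProj(T) → DGProj(S). -/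
/-!
Since `G` is t-exact, its left adjoint `F` is right t-exact, `G` restricts to a functor `G^♥`
between the hearts, and `F^♥ = H⁰ ∘ F` is left adjoint to `G^♥`. Cones of epimorphisms of the
heart are `≤ -1`, so `G^♥` preserves epimorphisms and `F^♥` preserves projectives.

For `Y` in the heart, `Hom(F(S(P)), Y) ≃ Hom(S(P), G Y) ≃ Hom(P, G^♥ Y) ≃ Hom(F^♥ P, Y)`,
and `F(S(P))` has no nonzero maps to objects `≥ 1` or `≤ -1`. Such an object is a derived
projective of `F^♥ P`: Yoneda on the heart yields a map to it from `S(F^♥ P)`, which is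
bijective on `Hom(-, X)` for every `X` by dévissage along truncation triangles.
-/

open CategoryTheory Category Limits Pretriangulated Triangulated

universe v u

variable {C : Type u} [Category.{v} C] [Preadditive C] [HasZeroObject C]
  [HasShift C ℤ] [∀ n : ℤ, (shiftFunctor C n).Additive] [Pretriangulated C]

namespace CategoryTheory.Pretriangulated

lemma bijective_comp_mor₂_of_distTriang {T : Triangle C} (hT : T ∈ distTriang C) {S : C}
    (h₁ : ∀ g : S ⟶ T.obj₁, g = 0) (h₁' : ∀ g : S ⟶ T.obj₁⟦(1 : ℤ)⟧, g = 0) :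
    Function.Bijective (fun g : S ⟶ T.obj₂ => g ≫ T.mor₂) := by
  refine ⟨fun g g' hgg' => ?_, fun k => ?_⟩
  · obtain ⟨d, hd⟩ := Triangle.coyoneda_exact₂ _ hT (g - g')
      (by simpa only [Preadditive.sub_comp, sub_eq_zero] using hgg')
    rw [← sub_eq_zero, hd, h₁ d, zero_comp]
  · obtain ⟨g, hg⟩ := Triangle.coyoneda_exact₃ _ hT k (h₁' _)
    exact ⟨g, hg.symm⟩

end CategoryTheory.Pretriangulated

lemma CategoryTheory.bijective_comp_iff_of_bijective_comp {A : Type*} [Category A]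
    {S S' X Y : A} (φ : S' ⟶ S) (m : X ⟶ Y)
    (hS : Function.Bijective (fun g : S ⟶ X => g ≫ m))
    (hS' : Function.Bijective (fun g : S' ⟶ X => g ≫ m)) :
    Function.Bijective (fun g : S ⟶ X => φ ≫ g) ↔ Function.Bijective (fun g : S ⟶ Y => φ ≫ g) := by
  have hcomm : (fun g : S ⟶ Y => φ ≫ g) ∘ (fun g : S ⟶ X => g ≫ m) =
      (fun g : S' ⟶ X => g ≫ m) ∘ (fun g : S ⟶ X => φ ≫ g) := by
    funext g
    exact (assoc φ g m).symm
  rw [← Function.Bijective.of_comp_iff _ hS, hcomm, Function.Bijective.of_comp_iff' hS']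

namespace CategoryTheory.Triangulated.TStructure

variable (t : TStructure C)

lemma exists_distTriang_heart_of_le_zero {X : C} (hX : t.le 0 X) :
    ∃ (W : C) (V : THeart t) (_ : t.le (-1) W) (a : W ⟶ X) (b : X ⟶ V.obj)
      (c : V.obj ⟶ W⟦(1 : ℤ)⟧), Triangle.mk a b c ∈ distTriang C := by
  obtain ⟨W, V, hW, hV, a, b, c, hT⟩ := t.exists_triangle X (-1) 0 (by lia)
  have hW' : t.le 0 (W⟦(1 : ℤ)⟧) := t.le_monotone (by lia) _ (t.le_shift (-1) 1 (-2) (by lia) W hW)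
  have hV' : t.IsLE V 0 := t.isLE₂ _ (rot_of_distTriang _ hT) 0 ⟨hX⟩ ⟨hW'⟩
  exact ⟨W, ⟨V, hV'.le, hV⟩, hW, a, b, c, hT⟩

lemma exists_distTriang_heart_of_ge_zero {X : C} (hX : t.ge 0 X) :
    ∃ (V : THeart t) (W : C) (_ : t.ge 1 W) (a : V.obj ⟶ X) (b : X ⟶ W)
      (c : W ⟶ V.obj⟦(1 : ℤ)⟧), Triangle.mk a b c ∈ distTriang C := by
  obtain ⟨V, W, hV, hW, a, b, c, hT⟩ := t.exists_triangle X 0 1 (by lia)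
  have hW' : t.ge 0 (W⟦(-1 : ℤ)⟧) := t.ge_antitone (by lia) _ (t.ge_shift 1 (-1) 2 (by lia) W hW)
  have hV' : t.IsGE V 0 := t.isGE₂ _ (inv_rot_of_distTriang _ hT) 0 ⟨hW'⟩ ⟨hX⟩
  exact ⟨⟨V, hV, hV'.ge⟩, W, hW, a, b, c, hT⟩

def OrthogonalOffHeart (S : C) : Prop :=
  (∀ ⦃Y : C⦄, t.ge 1 Y → ∀ g : S ⟶ Y, g = 0) ∧ ∀ ⦃Y : C⦄, t.le (-1) Y → ∀ g : S ⟶ Y, g = 0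

def CorepresentsOnHeart (S : C) (P : THeart t) : Prop :=
  ∃ β : ∀ Y : THeart t, (S ⟶ Y.obj) ≃ (P ⟶ Y),
    ∀ {Y Y' : THeart t} (f : S ⟶ Y.obj) (w : Y ⟶ Y'), β Y' (f ≫ w.hom) = β Y f ≫ w

variable {t}

lemma OrthogonalOffHeart.le_zero {S : C} (hS : t.OrthogonalOffHeart S) : t.le 0 S :=
  ((t.isLE_iff_orthogonal 0 1 rfl S).2 fun _ g hY => hS.1 hY.ge g).le

lemma OrthogonalOffHeart.bijective_comp_of_ge_one {S : C} (hS : t.OrthogonalOffHeart S)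
    {X₀ X X₁ : C} (hX₁ : t.ge 1 X₁) {m : X₀ ⟶ X} {n : X ⟶ X₁} {o : X₁ ⟶ X₀⟦(1 : ℤ)⟧}
    (hT : Triangle.mk m n o ∈ distTriang C) :
    Function.Bijective (fun g : S ⟶ X₀ => g ≫ m) := by
  have h₂ : t.ge 2 (X₁⟦(-1 : ℤ)⟧) := t.ge_shift 1 (-1) 2 (by lia) _ hX₁
  exact bijective_comp_mor₂_of_distTriang (inv_rot_of_distTriang _ hT)
    (hS.1 (t.ge_antitone (by lia) _ h₂)) (hS.1 (t.ge_shift 2 1 1 (by lia) _ h₂))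

lemma OrthogonalOffHeart.bijective_comp_of_le_neg_one {S : C} (hS : t.OrthogonalOffHeart S)
    {W X V : C} (hW : t.le (-1) W) {a : W ⟶ X} {b : X ⟶ V} {c : V ⟶ W⟦(1 : ℤ)⟧}
    (hT : Triangle.mk a b c ∈ distTriang C) :
    Function.Bijective (fun g : S ⟶ X => g ≫ b) :=
  bijective_comp_mor₂_of_distTriang hT (hS.2 hW)
    (hS.2 (t.le_monotone (by lia) _ (t.le_shift (-1) 1 (-2) (by lia) _ hW)))

/-- Dévissage along the truncation triangles `τ≤0 X → X → τ≥1 X` and `τ≤-1 X₀ → X₀ → H⁰ X₀`. -/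
lemma OrthogonalOffHeart.bijective_comp_of_bijective_comp_heart {S S' : C}
    (hS : t.OrthogonalOffHeart S) (hS' : t.OrthogonalOffHeart S') (φ : S' ⟶ S)
    (hφ : ∀ Y : THeart t, Function.Bijective (fun g : S ⟶ Y.obj => φ ≫ g)) (X : C) :
    Function.Bijective (fun g : S ⟶ X => φ ≫ g) := by
  obtain ⟨X₀, X₁, hX₀, hX₁, m, n, o, hTX⟩ := t.exists_triangle X 0 1 (by lia)
  obtain ⟨W, V, hW, a, b, c, hTX₀⟩ := t.exists_distTriang_heart_of_le_zero hX₀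
  have hφX₀ := (bijective_comp_iff_of_bijective_comp φ b (hS.bijective_comp_of_le_neg_one hW hTX₀)
    (hS'.bijective_comp_of_le_neg_one hW hTX₀)).2 (hφ V)
  exact (bijective_comp_iff_of_bijective_comp φ m (hS.bijective_comp_of_ge_one hX₁ hTX)
    (hS'.bijective_comp_of_ge_one hX₁ hTX)).1 hφX₀

lemma exists_hom_eq_of_natural_heart {S S' : C} (hS : t.le 0 S)
    (hS' : ∀ ⦃Y : C⦄, t.le (-1) Y → ∀ g : S' ⟶ Y, g = 0)
    (γ : ∀ Y : THeart t, (S ⟶ Y.obj) → (S' ⟶ Y.obj))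
    (hγ : ∀ {Y Y' : THeart t} (f : S ⟶ Y.obj) (w : Y ⟶ Y'), γ Y' (f ≫ w.hom) = γ Y f ≫ w.hom) :
    ∃ φ : S' ⟶ S, ∀ (Y : THeart t) (f : S ⟶ Y.obj), γ Y f = φ ≫ f := by
  obtain ⟨W, V, hW, a, b, c, hT⟩ := t.exists_distTriang_heart_of_le_zero hS
  obtain ⟨φ, hφ⟩ := Triangle.coyoneda_exact₃ _ hT (γ V b)
    (hS' (t.le_monotone (by lia) _ (t.le_shift (-1) 1 (-2) (by lia) _ hW)) _)
  refine ⟨φ, fun Y f => ?_⟩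
  obtain ⟨g, rfl⟩ := Triangle.yoneda_exact₂ _ hT f
    (t.zero_of_isLE_of_isGE _ (-1) 0 (by lia) ⟨hW⟩ ⟨Y.2.2⟩)
  change γ Y (b ≫ (ObjectProperty.homMk g : V ⟶ Y).hom) = _
  rw [hγ, hφ]
  exact assoc _ _ _

end CategoryTheory.Triangulated.TStructure

namespace TCohomology

variable {t : TStructure C} [Abelian (THeart t)]

lemma le_neg_one_of_isZero (h : TCohomology t) {X : C} (hX : t.le 0 X)
    (hHX : IsZero (h.H.obj X)) : t.le (-1) X := by
  refine ((t.isLE_iff_orthogonal (-1) 0 (by lia) X).2 fun Y g hY => ?_).le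
  obtain ⟨Y₀, Y₁, hY₁, m, n, o, hT⟩ := t.exists_distTriang_heart_of_ge_zero hY.ge
  obtain ⟨g₀, rfl⟩ := Triangle.coyoneda_exact₂ _ hT g
    (t.zero_of_isLE_of_isGE _ 0 1 (by lia) ⟨hX⟩ ⟨hY₁⟩)
  obtain rfl : g₀ = 0 := (h.bij_le X Y₀ hX).injective (hHX.eq_of_src _ _)
  exact zero_comp

lemma H_map_hom (h : TCohomology t) {A B : THeart t} (u : A ⟶ B) :
    h.H.map u.hom = h.restriction.hom.app A ≫ u ≫ h.restriction.inv.app B := by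
  simpa using h.restriction.hom.naturality_assoc u (h.restriction.inv.app B)

/-- The cone is `≤ 0`, and its `H⁰` is a quotient of `H⁰` of the target through which the
epimorphism factors as zero. -/
lemma le_neg_one_of_distTriang_of_epi (h : TCohomology t) {A B : THeart t} (u : A ⟶ B) [Epi u]
    {Z : C} {p : B.obj ⟶ Z} {q : Z ⟶ A.obj⟦(1 : ℤ)⟧}
    (hT : Triangle.mk u.hom p q ∈ distTriang C) : t.le (-1) Z := by
  have hA : t.le (-1) (A.obj⟦(1 : ℤ)⟧) := t.le_shift 0 1 (-1) (by lia) _ A.2.1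
  have hZ : t.le 0 Z :=
    (t.isLE₂ _ (rot_of_distTriang _ hT) 0 ⟨B.2.1⟩ ⟨t.le_monotone (by lia) _ hA⟩).le
  refine h.le_neg_one_of_isZero hZ ?_
  -- The heart is also preadditive as a full subcategory of `C`; `h.homological` refers to the
  -- preadditive structure of its `Abelian` instance.
  let : Preadditive (THeart t) := Abelian.toPreadditive
  have := h.homological
  have : Epi (h.H.map p) := (h.H.map_distinguished_exact _ (rot_of_distTriang _ hT)).epi_f
    ((h.zero_of_le _ hA).eq_of_tgt _ _)
  have : Epi (h.H.map u.hom) := by rw [h.H_map_hom]; infer_instance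
  have hp : h.H.map p = 0 := by
    have hup : u.hom ≫ p = 0 := comp_distTriang_mor_zero₁₂ _ hT
    rw [← cancel_epi (h.H.map u.hom), ← h.H.map_comp, hup, Functor.map_zero, comp_zero]
  rw [IsZero.iff_id_eq_zero, ← cancel_epi (h.H.map p), hp, zero_comp, comp_zero]

end TCohomology

section

variable {t : TStructure C} [Abelian (THeart t)] {h : TCohomology t}

lemma IsDerivedProjective.orthogonalOffHeart {P : THeart t} {S : C}
    (hS : IsDerivedProjective t h P S) : t.OrthogonalOffHeart S := by
  obtain ⟨e, -⟩ := hS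
  exact ⟨fun Y hY _ => (e Y).injective ((h.zero_of_ge Y hY).eq_of_tgt _ _),
    fun Y hY _ => (e Y).injective ((h.zero_of_le Y hY).eq_of_tgt _ _)⟩

lemma IsDerivedProjective.corepresentsOnHeart {P : THeart t} {S : C}
    (hS : IsDerivedProjective t h P S) : t.CorepresentsOnHeart S P := by
  obtain ⟨e, he⟩ := hS
  refine ⟨fun Y => (e Y.obj).trans (h.restriction.app Y).homToEquiv, fun f w => ?_⟩
  simp only [Equiv.trans_apply, Iso.homToEquiv_apply, Iso.app_hom, he, assoc]
  congr 1
  exact h.restriction.hom.naturality w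

lemma IsDerivedProjective.of_corepresentsOnHeart {Q : THeart t} {S' S : C}
    (hS' : IsDerivedProjective t h Q S') (hS : t.OrthogonalOffHeart S)
    (hSQ : t.CorepresentsOnHeart S Q) : IsDerivedProjective t h Q S := by
  obtain ⟨α, hα⟩ := hSQ
  obtain ⟨β, hβ⟩ := hS'.corepresentsOnHeart
  obtain ⟨φ, hφ⟩ := TStructure.exists_hom_eq_of_natural_heart hS.le_zero
    hS'.orthogonalOffHeart.2 (fun Y f => (β Y).symm (α Y f)) fun f w => by
      apply (β _).injective
      simp only [Equiv.apply_symm_apply, hα, hβ]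
  have hφ_bij (X : C) : Function.Bijective (fun g : S ⟶ X => φ ≫ g) := by
    refine hS.bijective_comp_of_bijective_comp_heart hS'.orthogonalOffHeart φ (fun Y => ?_) X
    convert ((α Y).trans (β Y).symm).bijective using 1
    exact funext fun f => (hφ Y f).symm
  obtain ⟨e, he⟩ := hS'
  exact ⟨fun X => (Equiv.ofBijective _ (hφ_bij X)).trans (e X), fun X Y f g => by
    simp only [Equiv.trans_apply, Equiv.ofBijective_apply, ← he, assoc]⟩

end

universe v₂ u₂

section Adjunction

variable {D : Type u₂} [Category.{v₂} D] [Preadditive D] [HasZeroObject D]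
  [HasShift D ℤ] [∀ n : ℤ, (shiftFunctor D n).Additive] [Pretriangulated D]
  {tC : TStructure C} {tD : TStructure D} {F : C ⥤ D} {G : D ⥤ C}

lemma CategoryTheory.Adjunction.le_obj_of_ge_map (adj : F ⊣ G) {n : ℤ}
    (hG : ∀ Y : D, tD.ge (n + 1) Y → tC.ge (n + 1) (G.obj Y)) {X : C} (hX : tC.le n X) :
    tD.le n (F.obj X) := by
  refine ((tD.isLE_iff_orthogonal n (n + 1) rfl _).2 fun Y g hY => ?_).le
  have hXY (f : X ⟶ G.obj Y) : f = 0 :=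
    tC.zero_of_isLE_of_isGE f n (n + 1) (by lia) ⟨hX⟩ ⟨hG Y hY.ge⟩
  exact (adj.homEquiv X Y).injective ((hXY _).trans (hXY _).symm)

lemma CategoryTheory.Triangulated.TStructure.OrthogonalOffHeart.leftAdjoint_obj (adj : F ⊣ G)
    (hG₁ : ∀ Y : D, tD.ge 1 Y → tC.ge 1 (G.obj Y))
    (hG₂ : ∀ Y : D, tD.le (-1) Y → tC.le (-1) (G.obj Y))
    {S : C} (hS : tC.OrthogonalOffHeart S) : tD.OrthogonalOffHeart (F.obj S) :=
  ⟨fun Y hY _ => (adj.homEquiv S Y).injective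
      ((hS.1 (hG₁ Y hY) _).trans (hS.1 (hG₁ Y hY) _).symm),
    fun Y hY _ => (adj.homEquiv S Y).injective
      ((hS.2 (hG₂ Y hY) _).trans (hS.2 (hG₂ Y hY) _).symm)⟩

abbrev heartLift (G : D ⥤ C) (hG : ∀ Y : THeart tD, tC.le 0 (G.obj Y.obj) ∧ tC.ge 0 (G.obj Y.obj)) :
    THeart tD ⥤ THeart tC :=
  ObjectProperty.lift _ (THeartIncl tD ⋙ G) hG

abbrev heartFunctor (tC : TStructure C) [Abelian (THeart tD)] (hD : TCohomology tD) (F : C ⥤ D) :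
    THeart tC ⥤ THeart tD :=
  THeartIncl tC ⋙ F ⋙ hD.H

variable {hG : ∀ Y : THeart tD, tC.le 0 (G.obj Y.obj) ∧ tC.ge 0 (G.obj Y.obj)}

noncomputable def heartAdjunction [Abelian (THeart tD)] (hD : TCohomology tD) (adj : F ⊣ G)
    (hF : ∀ X : THeart tC, tD.le 0 (F.obj X.obj)) :
    heartFunctor tC hD F ⊣ heartLift G hG :=
  Adjunction.mkOfHomEquiv
    { homEquiv := fun X Y => (InducedCategory.homEquiv.trans ((adj.homEquiv X.obj Y.obj).symm.trans
        (Equiv.ofBijective _ (hD.bij_le _ Y (hF X))))).symm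
      homEquiv_naturality_left_symm := fun f g => by
        change hD.H.map ((adj.homEquiv _ _).symm (f ≫ g).hom) ≫ _ =
          hD.H.map (F.map f.hom) ≫ hD.H.map ((adj.homEquiv _ _).symm g.hom) ≫ _
        rw [ObjectProperty.FullSubcategory.comp_hom, adj.homEquiv_naturality_left_symm,
          Functor.map_comp, assoc]
      homEquiv_naturality_right := fun {X Y Y'} f g => by
        obtain ⟨k, rfl⟩ := (hD.bij_le _ Y (hF X)).surjective f
        rw [Equiv.symm_apply_eq]
        simp only [Equiv.trans_apply, Equiv.symm_trans_apply, Equiv.symm_symm,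
          Equiv.ofBijective_symm_apply_apply]
        change _ = hD.H.map ((adj.homEquiv _ _).symm ((adj.homEquiv _ _) k ≫ G.map g.hom)) ≫ _
        rw [adj.homEquiv_naturality_right_symm, Equiv.symm_apply_apply, Functor.map_comp, assoc,
          assoc]
        congr 1
        exact (hD.restriction.hom.naturality g).symm }

lemma CategoryTheory.Triangulated.TStructure.CorepresentsOnHeart.leftAdjoint_obj
    {F' : THeart tC ⥤ THeart tD} (adj : F ⊣ G) (adj' : F' ⊣ heartLift G hG) {S : C}
    {P : THeart tC} (hSP : tC.CorepresentsOnHeart S P) :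
    tD.CorepresentsOnHeart (F.obj S) (F'.obj P) := by
  obtain ⟨β, hβ⟩ := hSP
  refine ⟨fun Y => (adj.homEquiv S Y.obj).trans ((β _).trans (adj'.homEquiv P Y).symm),
    fun f w => ?_⟩
  simp only [Equiv.trans_apply, adj.homEquiv_naturality_right]
  rw [← adj'.homEquiv_naturality_right_symm, ← hβ]
  rfl

lemma heartLift_preservesEpimorphisms [Abelian (THeart tD)] (hD : TCohomology tD)
    [G.CommShift ℤ] [G.IsTriangulated] (hG' : ∀ Y : D, tD.le (-1) Y → tC.le (-1) (G.obj Y)) :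
    (heartLift G hG).PreservesEpimorphisms := by
  refine ⟨fun {A B} u _ => ⟨fun {Z} f₁ f₂ hf => InducedCategory.hom_ext ?_⟩⟩
  obtain ⟨K, p, q, hT⟩ := distinguished_cocone_triangle u.hom
  have hK := hG' _ (hD.le_neg_one_of_distTriang_of_epi u hT)
  obtain ⟨d, hd⟩ := Triangle.yoneda_exact₂ _ (G.map_distinguished _ hT) (f₁.hom - f₂.hom) (by
    change G.map u.hom ≫ (f₁.hom - f₂.hom) = 0
    rw [Preadditive.comp_sub, sub_eq_zero]
    exact congrArg InducedCategory.Hom.hom hf)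
  rw [← sub_eq_zero, hd, tC.zero_of_isLE_of_isGE d (-1) 0 (by lia) ⟨hK⟩ ⟨Z.2.2⟩]
  exact comp_zero

end Adjunction

/-- Let `F : T ⥤ S` be an exact functor between triangulated categories
with t-structures, both having derived projectives. If `F` admits a t-exact right adjoint
`G`, then `F` preserves derived projectives: for every projective `P` of `T^♥` and every
derived projective `SP` associated to `P`, the object `F(SP)` is a derived projective
associated to `F^♥(P) = H⁰(F(P))` (which is projective in `S^♥`); in particular
`F(S_T(P)) ≅ S_S(F^♥(P))` and `F` restricts to a functor `DGProj(T) → DGProj(S)`. -/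
theorem statement16 {D : Type u₂} [Category.{v₂} D] [Preadditive D] [HasZeroObject D]
    [HasShift D ℤ] [∀ n : ℤ, (shiftFunctor D n).Additive] [Pretriangulated D]
    (tC : TStructure C) (tD : TStructure D)
    [Abelian (THeart tC)] [Abelian (THeart tD)]
    (hC : TCohomology tC) (hD : TCohomology tD)
    (hDPC : ∀ P : THeart tC, Projective P → ∃ SP : C, IsDerivedProjective tC hC P SP)
    (hDPD : ∀ P : THeart tD, Projective P → ∃ SP : D, IsDerivedProjective tD hD P SP)
    (F : C ⥤ D) (G : D ⥤ C)
    [F.CommShift ℤ] [F.IsTriangulated] [G.CommShift ℤ] [G.IsTriangulated]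
    (adj : F ⊣ G)
    (hGle : ∀ (n : ℤ) (Y : D), tD.le n Y → tC.le n (G.obj Y))
    (hGge : ∀ (n : ℤ) (Y : D), tD.ge n Y → tC.ge n (G.obj Y))
    (P : THeart tC) (hP : Projective P)
    (SP : C) (hSP : IsDerivedProjective tC hC P SP) :
    Projective (hD.H.obj (F.obj P.obj)) ∧
      IsDerivedProjective tD hD (hD.H.obj (F.obj P.obj)) (F.obj SP) := by
  have hG (Y : THeart tD) : tC.le 0 (G.obj Y.obj) ∧ tC.ge 0 (G.obj Y.obj) :=
    ⟨hGle 0 _ Y.2.1, hGge 0 _ Y.2.2⟩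
  have := heartLift_preservesEpimorphisms (hG := hG) hD (hGle (-1))
  let adjH := heartAdjunction (hG := hG) hD adj fun X => adj.le_obj_of_ge_map (hGge (0 + 1)) X.2.1
  have hQ : Projective (hD.H.obj (F.obj P.obj)) := adjH.map_projective P hP
  obtain ⟨SQ, hSQ⟩ := hDPD _ hQ
  exact ⟨hQ, hSQ.of_corepresentsOnHeart
    (hSP.orthogonalOffHeart.leftAdjoint_obj adj (hGge 1) (hGle (-1)))
    (hSP.corepresentsOnHeart.leftAdjoint_obj adj adjH)⟩
end

section
/- Let T be a triangulated category with a t-structure which has derived projectives. Then T^− = ∪_{n≥0} T_{≤ n}, with its induced t-structure, also has derived projectives, and the full subcategory of derived projectives of T^− coincides with that of T: DGProj(T^−) = DGProj(T). -/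
open CategoryTheory Category Limits Pretriangulated Triangulated

universe v u

variable {C : Type u} [Category.{v} C] [Preadditive C] [HasZeroObject C]
  [HasShift C ℤ] [∀ n : ℤ, (shiftFunctor C n).Additive] [Pretriangulated C]

/-- `SP ∈ T⁻` is a derived projective associated to `P ∈ T^♥` *relative to the subcategory
`T⁻ = ∪_{n≥0} T_{≤n}` with its induced t-structure* (whose heart is again `T^♥`) when it
represents `T^♥(P, H⁰(-))` on objects of `T⁻`. -/
def IsDerivedProjectiveOnMinus (t : TStructure C) [Abelian (THeart t)] (h : TCohomology t)
    (P : THeart t) (SP : C) : Prop :=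
  (∃ n : ℕ, t.le (n : ℤ) SP) ∧
  ∃ e : ∀ X : C, (∃ m : ℕ, t.le (m : ℤ) X) → ((SP ⟶ X) ≃ (P ⟶ h.H.obj X)),
    ∀ (X Y : C) (hX : ∃ m : ℕ, t.le (m : ℤ) X) (hY : ∃ m : ℕ, t.le (m : ℤ) Y)
      (f : X ⟶ Y) (g : SP ⟶ X), e Y hY (g ≫ f) = e X hX g ≫ h.H.map f

/-!
A derived projective `S` of `T` satisfies `T(S, Y) ≅ T^♥(P, H⁰Y) = 0` for `Y ∈ T_{≥1}`,
so `S ∈ T_{≤0} ⊆ T⁻`, and restricting its representing bijections to `T⁻` makes it a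
derived projective of `T⁻`. Conversely, let `S ∈ T_{≤n}` (`n ≥ 0`) represent
`T^♥(P, H⁰(-))` on `T⁻`. For any `X`, the truncation `τ_{≤n}X ⟶ X` induces bijections on
`T(S, -)` (as `S ∈ T_{≤n}`) and on `H⁰` (its cone `τ_{>n}X` and the cone's desuspension lie
in `T_{≥1}`), and `τ_{≤n}X ∈ T⁻`; so the representation extends naturally to all of `T`.
-/

namespace CategoryTheory

lemma Functor.IsHomological.isIso_map_mor₁ {A : Type*} [Category A] [Abelian A]
    (F : C ⥤ A) [F.IsHomological] {T : Triangle C} (hT : T ∈ distTriang C)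
    (h₃ : IsZero (F.obj T.obj₃)) (h₃' : IsZero (F.obj (T.obj₃⟦(-1 : ℤ)⟧))) :
    IsIso (F.map T.mor₁) :=
  have : Epi (F.map T.mor₁) := (F.map_distinguished_exact _ hT).epi_f (h₃.eq_of_tgt _ _)
  have : Mono (F.map T.mor₁) :=
    (F.map_distinguished_exact _ (inv_rot_of_distTriang _ hT)).mono_g (h₃'.eq_of_src _ _)
  isIso_of_mono_of_epi _

noncomputable def Triangulated.TStructure.homTruncLEEquiv (t : TStructure C) {Y : C} (X : C)
    (n : ℤ) [t.IsLE Y n] : (Y ⟶ (t.truncLE n).obj X) ≃ (Y ⟶ X) where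
  toFun f := f ≫ (t.truncLEι n).app X
  invFun f := t.liftTruncLE f n
  left_inv _ := t.to_truncLE_obj_ext (by simp)
  right_inv _ := by simp

end CategoryTheory

-- `THeart t` also inherits a `Preadditive` instance from `C`; `TCohomology` uses the abelian one.
attribute [local instance 10000] Abelian.toPreadditive

namespace TCohomology

variable {t : TStructure C} [Abelian (THeart t)] (h : TCohomology t)

lemma isZero_obj_of_isGE (X : C) (n : ℤ) (hn : 1 ≤ n) [t.IsGE X n] : IsZero (h.H.obj X) :=
  have := t.isGE_of_ge X 1 n hn
  h.zero_of_ge X (t.ge_of_isGE X 1)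

lemma isIso_map_truncLEι_app {n : ℤ} (hn : 0 ≤ n) (X : C) :
    IsIso (h.H.map ((t.truncLEι n).app X)) :=
  have := h.homological
  have := t.isGE_shift ((t.truncGT n).obj X) (n + 1) (-1) (n + 2)
  Functor.IsHomological.isIso_map_mor₁ h.H (T := (t.triangleLEGT n).obj X)
    (t.triangleLEGT_distinguished n X)
    (h.isZero_obj_of_isGE ((t.truncGT n).obj X) (n + 1) (by lia))
    (h.isZero_obj_of_isGE (((t.truncGT n).obj X)⟦(-1 : ℤ)⟧) (n + 2) (by lia))

end TCohomology

variable {t : TStructure C} [Abelian (THeart t)] {h : TCohomology t} {P : THeart t} {SP : C}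

lemma IsDerivedProjective.isLE_zero (hSP : IsDerivedProjective t h P SP) : t.IsLE SP 0 := by
  obtain ⟨e, -⟩ := hSP
  rw [t.isLE_iff_orthogonal 0 1 rfl]
  intro Y f _
  exact (e Y).injective ((h.isZero_obj_of_isGE Y 1 le_rfl).eq_of_tgt _ _)

lemma IsDerivedProjective.isDerivedProjectiveOnMinus (hSP : IsDerivedProjective t h P SP) :
    IsDerivedProjectiveOnMinus t h P SP := by
  have := hSP.isLE_zero
  obtain ⟨e, he⟩ := hSP
  exact ⟨⟨0, t.le_of_isLE SP 0⟩, fun X _ => e X, fun X Y _ _ => he X Y⟩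

lemma IsDerivedProjectiveOnMinus.isDerivedProjective
    (hSP : IsDerivedProjectiveOnMinus t h P SP) :
    IsDerivedProjective t h P SP := by
  obtain ⟨⟨n, hn⟩, e, he⟩ := hSP
  have : t.IsLE SP n := ⟨hn⟩
  have hτ (X : C) : ∃ m : ℕ, t.le m ((t.truncLE n).obj X) := ⟨n, t.le_of_isLE _ _⟩
  have := h.isIso_map_truncLEι_app (n := n) (by lia)
  refine ⟨fun X => ((t.homTruncLEEquiv X n).symm.trans (e _ (hτ X))).trans
    (asIso (h.H.map ((t.truncLEι n).app X))).homToEquiv, fun X Y f g => ?_⟩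
  have hlift : (t.homTruncLEEquiv Y n).symm (g ≫ f) =
      (t.homTruncLEEquiv X n).symm g ≫ (t.truncLE n).map f := by
    rw [Equiv.symm_apply_eq]
    simp [TStructure.homTruncLEEquiv]
  simp only [Equiv.trans_apply, Iso.homToEquiv_apply, asIso_hom, hlift, he _ _ (hτ X) (hτ Y),
    assoc, ← Functor.map_comp, (t.truncLEι n).naturality, Functor.id_map]

/-- Let `C` be a triangulated category with a t-structure `t` which has
derived projectives. Then `T⁻ = ∪_{n≥0} T_{≤n}`, with its induced t-structure (whose heart
is again `T^♥`), also has derived projectives, and `DGProj(T⁻) = DGProj(T)`: every derived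
projective of `T` lies in `T⁻` and is a derived projective of `T⁻`, and conversely every
derived projective of `T⁻` is a derived projective of `T`. -/
theorem statement18 (t : TStructure C) [Abelian (THeart t)] (h : TCohomology t)
    (hDP : ∀ P : THeart t, Projective P → ∃ SP : C, IsDerivedProjective t h P SP) :
    -- `T⁻` has derived projectives
    (∀ P : THeart t, Projective P → ∃ SP : C, IsDerivedProjectiveOnMinus t h P SP) ∧
    -- `DGProj(T) ⊆ DGProj(T⁻)`: derived projectives of `T` lie in `T⁻` and are derived
    -- projectives for the induced t-structure on `T⁻`
    (∀ (P : THeart t), Projective P → ∀ SP : C, IsDerivedProjective t h P SP →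
      IsDerivedProjectiveOnMinus t h P SP) ∧
    -- `DGProj(T⁻) ⊆ DGProj(T)`: derived projectives of `T⁻` are derived projectives of `T`
    (∀ (P : THeart t), Projective P → ∀ SP : C, IsDerivedProjectiveOnMinus t h P SP →
      IsDerivedProjective t h P SP) :=
  ⟨fun P hP => (hDP P hP).imp fun _ hSP => hSP.isDerivedProjectiveOnMinus,
    fun _ _ _ hSP => hSP.isDerivedProjectiveOnMinus,
    fun _ _ _ hSP => hSP.isDerivedProjective⟩
end
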